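/- arXiv:1309.2137 — 10 statements merged into one kernel-verified Lean document; each statement's English description precedes it below -/
import Mathlib

section
/- For the word u = 012102010212 over {0,1,2} and the conducting sequences β₁ = 000000000001111111101111 and β₂ = 000000110100100111101111, the shuffles u ⧢_{β₁} u and u ⧢_{β₂} u are both equal to w = 012102010210121020120212; moreover both u and w are square-free. -/
def SqFreeWord {α : Type*} (w : List α) : Prop :=
  ∀ x : List α, x ≠ [] → ¬ (x ++ x) <:+: w

def condShuffle {α : Type*} : List Bool → List α → List α → List α
  | [], _, _ => []
  | (false :: β), (a :: u), v => a :: condShuffle β u v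
  | (false :: _), [], _ => []
  | (true :: β), u, (a :: v) => a :: condShuffle β u v
  | (true :: _), _, [] => []


theorem sqFree_of_check {α : Type*} [DecidableEq α] (w : List α)
    (h : ∀ t ∈ w.tails, ∀ p ∈ t.inits,
        p = [] ∨ p.length % 2 = 1 ∨ p.take (p.length / 2) ≠ p.drop (p.length / 2)) :
    SqFreeWord w := by
  intro x hx hinf
  obtain ⟨s, t, hst⟩ := hinf
  have ht : (x ++ x) ++ t ∈ w.tails := by
    rw [List.mem_tails]
    exact ⟨s, by simpa using hst⟩
  have hp : (x ++ x) ∈ ((x ++ x) ++ t).inits := by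
    rw [List.mem_inits]; exact ⟨t, rfl⟩
  rcases h _ ht _ hp with h1 | h2 | h3
  · exact hx (by simpa using h1)
  · simp [List.length_append] at h2; omega
  · apply h3
    have hl : (x ++ x).length / 2 = x.length := by simp; omega
    rw [hl, List.take_left, List.drop_left]

theorem stmt1 :
    condShuffle [false,false,false,false,false,false,false,false,false,false,false,true,true,true,true,true,true,true,true,false,true,true,true,true] ([0,1,2,1,0,2,0,1,0,2,1,2] : List (Fin 3)) ([0,1,2,1,0,2,0,1,0,2,1,2] : List (Fin 3)) = [0,1,2,1,0,2,0,1,0,2,1,0,1,2,1,0,2,0,1,2,0,2,1,2] ∧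
    condShuffle [false,false,false,false,false,false,true,true,false,true,false,false,true,false,false,true,true,true,true,false,true,true,true,true] ([0,1,2,1,0,2,0,1,0,2,1,2] : List (Fin 3)) ([0,1,2,1,0,2,0,1,0,2,1,2] : List (Fin 3)) = [0,1,2,1,0,2,0,1,0,2,1,0,1,2,1,0,2,0,1,2,0,2,1,2] ∧
    SqFreeWord ([0,1,2,1,0,2,0,1,0,2,1,2] : List (Fin 3)) ∧ SqFreeWord ([0,1,2,1,0,2,0,1,0,2,1,0,1,2,1,0,2,0,1,2,0,2,1,2] : List (Fin 3)) := by
  refine ⟨rfl, rfl, ?_, ?_⟩ <;> (apply sqFree_of_check; decide)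
end

section
/- The word u = (012)² = 012012 is not square-free, yet the shuffle u ⧢_β u with conducting sequence β = 000001011111 equals 012010212012, which is square-free. -/
theorem stmt2 :
    ¬ SqFreeWord ([0,1,2,0,1,2] : List (Fin 3)) ∧
    condShuffle [false,false,false,false,false,true,false,true,true,true,true,true] ([0,1,2,0,1,2] : List (Fin 3)) ([0,1,2,0,1,2] : List (Fin 3)) = [0,1,2,0,1,0,2,1,2,0,1,2] ∧
    SqFreeWord ([0,1,2,0,1,0,2,1,2,0,1,2] : List (Fin 3)) := by
  refine ⟨?_, rfl, ?_⟩
  · intro h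
    exact h [0,1,2] (by simp) (by decide)
  · intro x hx hinf
    set w : List (Fin 3) := [0,1,2,0,1,0,2,1,2,0,1,2] with hw
    have hx' : x <:+: w := ((List.prefix_append x x).isInfix).trans hinf
    have hmem : x ∈ w.tails.flatMap List.inits := by
      obtain ⟨t, ht1, ht2⟩ := List.infix_iff_prefix_suffix.mp hx'
      exact List.mem_flatMap.mpr ⟨t, (List.mem_tails _ _).mpr ht2, (List.mem_inits _ _).mpr ht1⟩
    have key : ∀ y ∈ w.tails.flatMap List.inits, y ≠ [] → ¬ (y ++ y) <:+: w := by decide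
    exact key x hmem hx hinf
end

section
/- If u is any nonempty square-free word over the alphabet {0,1,2,3,4} not containing letters 3 or 4, then the word u34 is square-free, and for β = 0^{|u|+1} 1^{|u|} 0 1 1 the shuffle (u34) ⧢_β (u34) equals u3u434, which is square-free. -/
namespace List

variable {α : Type*}

theorem append_cons_inj_of_notMem_left {x₁ x₂ z₁ z₂ : List α} {a : α}
    (h₁ : a ∉ x₁) (h₂ : a ∉ x₂) :
    x₁ ++ a :: z₁ = x₂ ++ a :: z₂ ↔ x₁ = x₂ ∧ z₁ = z₂ := by
  induction x₁ generalizing x₂ with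
  | nil => cases x₂ <;> simp_all [eq_comm]
  | cons b x₁ ih => cases x₂ <;> simp_all [eq_comm, and_assoc]

theorem IsInfix.of_append_cons_of_notMem {l a b : List α} {c : α}
    (h : l <:+: a ++ c :: b) (hc : c ∉ l) : l <:+: a ∨ l <:+: b := by
  rcases infix_append_iff.mp h with h | h | ⟨l₁, l₂, rfl, h₁, h₂⟩
  · exact .inl h
  · rcases infix_cons_iff.mp h with h | h
    · rcases prefix_cons_iff.mp h with rfl | ⟨_, rfl, -⟩
      · exact .inl nil_infix
      · exact absurd mem_cons_self hc
    · exact .inr h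
  · rcases prefix_cons_iff.mp h₂ with rfl | ⟨_, rfl, -⟩
    · exact .inl (by simpa using h₁.isInfix)
    · simp at hc

theorem eq_getLast_of_append_singleton_eq_append {s u v : List α} {c : α} (hv : v ≠ [])
    (h : s ++ [c] = u ++ v) : c = v.getLast hv := by
  simpa [getLast?_eq_some_getLast hv] using congrArg getLast? h

end List

open List

section Shuffle

variable {α : Type*}

theorem condShuffle_replicate_false_append (u₁ u₂ v : List α) (β : List Bool) :
    condShuffle (replicate u₁.length false ++ β) (u₁ ++ u₂) v = u₁ ++ condShuffle β u₂ v := by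
  induction u₁ with
  | nil => rfl
  | cons a u₁ ih => simp [condShuffle, replicate_succ, ih]

theorem condShuffle_replicate_true_append (u v₁ v₂ : List α) (β : List Bool) :
    condShuffle (replicate v₁.length true ++ β) u (v₁ ++ v₂) = v₁ ++ condShuffle β u v₂ := by
  induction v₁ with
  | nil => rfl
  | cons a v₁ ih => simp [condShuffle, replicate_succ, ih]

theorem condShuffle_append_pair (u : List α) (c d : α) :
    condShuffle (replicate (u.length + 1) false ++ replicate u.length true ++ [false, true, true])
      (u ++ [c, d]) (u ++ [c, d]) = u ++ [c] ++ u ++ [d, c, d] := by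
  have h₁ := condShuffle_replicate_false_append (u ++ [c]) [d] (u ++ [c, d])
    (replicate u.length true ++ [false, true, true])
  have h₂ := condShuffle_replicate_true_append [d] u [c, d] [false, true, true]
  simp only [length_append, length_singleton, append_assoc, singleton_append] at h₁ h₂ ⊢
  rw [h₁, h₂]
  simp [condShuffle]

end Shuffle

section SquareFree

variable {α : Type*}

theorem two_le_count_of_mem_of_append_self_infix [BEq α] [LawfulBEq α] {x w : List α} {c : α}
    (hc : c ∈ x) (h : x ++ x <:+: w) : 2 ≤ w.count c := by
  have := h.count_le c
  rw [count_append] at this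
  have := count_pos_iff.mpr hc
  omega

theorem SqFreeWord.of_nodup [DecidableEq α] {w : List α} (hw : w.Nodup) : SqFreeWord w := by
  intro x hx hxx
  obtain ⟨c, hc⟩ := exists_mem_of_ne_nil x hx
  have := two_le_count_of_mem_of_append_self_infix hc hxx
  have := nodup_iff_count_le_one.mp hw c
  omega

theorem SqFreeWord.append_cons [DecidableEq α] {a b : List α} {c : α} (ha : SqFreeWord a)
    (hb : SqFreeWord b) (hca : c ∉ a) (hcb : c ∉ b) : SqFreeWord (a ++ c :: b) := by
  intro x hx hxx
  by_cases hc : c ∈ x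
  · have := two_le_count_of_mem_of_append_self_infix hc hxx
    simp [count_eq_zero.mpr hca, count_eq_zero.mpr hcb] at this
  · rcases hxx.of_append_cons_of_notMem (by simpa using hc) with h | h
    exacts [ha x hx h, hb x hx h]

theorem not_append_self_infix_of_mem [DecidableEq α] {u x : List α} {c d : α} (hu : u ≠ [])
    (hc : c ∉ u) (hd : d ∉ u) (hcd : c ≠ d) (hdx : d ∈ x) :
    ¬ x ++ x <:+: u ++ [c] ++ u ++ [d, c, d] := by
  rintro ⟨s, t, hst⟩
  obtain ⟨x₁, x₂, rfl⟩ := append_of_mem hdx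
  have hcount : count d s + 2 * (count d x₁ + count d x₂ + 1) + count d t = 2 := by
    have := congrArg (count d) hst
    simp [count_eq_zero.mpr hd, hcd] at this
    omega
  have hs : d ∉ s ++ x₁ := by simp only [mem_append, not_or, ← count_eq_zero]; omega
  have hx : d ∉ x₂ ++ x₁ := by simp only [mem_append, not_or, ← count_eq_zero]; omega
  have hsplit : (s ++ x₁) ++ d :: ((x₂ ++ x₁) ++ d :: (x₂ ++ t))
      = (u ++ c :: u) ++ d :: ([c] ++ d :: []) := by
    simpa using hst
  obtain ⟨hpre, hsuf⟩ := (append_cons_inj_of_notMem_left hs (by simp [hd, hcd.symm])).mp hsplit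
  obtain ⟨hmid, hend⟩ := (append_cons_inj_of_notMem_left hx (by simp [hcd.symm])).mp hsuf
  obtain ⟨rfl, rfl⟩ := append_eq_nil_iff.mp hend
  obtain rfl : x₁ = [c] := by simpa using hmid
  have hlast : c = u.getLast hu :=
    eq_getLast_of_append_singleton_eq_append hu (hpre.trans (append_cons _ _ _))
  exact hc (hlast ▸ getLast_mem hu)

theorem SqFreeWord.append_singleton_append_self_append [DecidableEq α] {u : List α} {c d : α}
    (hsf : SqFreeWord u) (hu : u ≠ []) (hc : c ∉ u) (hd : d ∉ u) (hcd : c ≠ d) :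
    SqFreeWord (u ++ [c] ++ u ++ [d, c, d]) := by
  intro x hx hxx
  by_cases hdx : d ∈ x
  · exact not_append_self_infix_of_mem hu hc hd hcd hdx hxx
  · rw [show u ++ [c] ++ u ++ [d, c, d] = (u ++ c :: u) ++ d :: [c, d] by simp] at hxx
    rcases hxx.of_append_cons_of_notMem (by simpa using hdx) with h | h
    · exact hsf.append_cons hsf hc hc x hx h
    · exact SqFreeWord.of_nodup (by simp [hcd]) x hx h

end SquareFree

theorem stmt3 (u : List (Fin 5)) (hne : u ≠ []) (hsf : SqFreeWord u)
    (hsub : ∀ a ∈ u, a.val < 3) :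
    SqFreeWord (u ++ [3, 4]) ∧
    condShuffle (List.replicate (u.length + 1) false ++ List.replicate u.length true
        ++ [false, true, true]) (u ++ [3, 4]) (u ++ [3, 4])
      = u ++ [3] ++ u ++ [4, 3, 4] ∧
    SqFreeWord (u ++ [3] ++ u ++ [4, 3, 4]) := by
  have h3 : (3 : Fin 5) ∉ u := fun h => absurd (hsub 3 h) (by decide)
  have h4 : (4 : Fin 5) ∉ u := fun h => absurd (hsub 4 h) (by decide)
  exact ⟨hsf.append_cons (.of_nodup (nodup_singleton 4)) h3 (by decide),
    condShuffle_append_pair u 3 4,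
    hsf.append_singleton_append_self_append hne h3 h4 (by decide)⟩
end

section
/- Let h be a substitution (or morphism) on an alphabet Σ such that: (1) no image of a letter occurs properly inside any image of a two-letter word, (2) no image of a letter is a proper prefix of an image of another letter (hence h is injective on letters), and (3) images of distinct letters end in distinct letters. If moreover no image of a square-free word of length at most 8 contains a square of period at most 52, and every image of a letter has length at most 18, then h is square-free. -/
/-!
Condition (1) says that the images of letters form a comma-free code, so in a product
`h(w) = ws.flatten` every occurrence of an image of a letter starts at a block boundary; by (3)
the letter is then determined as well. Let `xx` be a square in `h(w)`, and discard the blocks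
lying entirely before or after it. If a block lies inside one half of `xx`, the run of blocks
inside the first half reappears, shifted by `|x|`, as a run of blocks of the same letters; where
the copy starts then yields a square in `w`, possibly after extending both runs by one block whose
images end in the same letter. Otherwise `xx` meets at most three blocks, hence `|x| ≤ 27` and
the trimmed factor of `w` has length at most three, which the finite check excludes.
-/

namespace List

variable {γ : Type*}

def cutPos (ws : List (List γ)) (k : ℕ) : ℕ := (ws.take k).flatten.length

variable {ws : List (List γ)}

@[simp] theorem cutPos_zero : ws.cutPos 0 = 0 := by simp [cutPos]

theorem cutPos_cons_succ (v : List γ) (k : ℕ) :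
    (v :: ws).cutPos (k + 1) = v.length + ws.cutPos k := by
  simp [cutPos]

theorem cutPos_add (i d : ℕ) :
    ws.cutPos (i + d) = ws.cutPos i + ((ws.drop i).take d).flatten.length := by
  simp [cutPos, take_add]

theorem cutPos_succ {k : ℕ} (hk : k < ws.length) :
    ws.cutPos (k + 1) = ws.cutPos k + ws[k].length := by
  rw [cutPos_add, drop_eq_getElem_cons hk]
  simp only [take_succ_cons, take_zero, flatten_cons, flatten_nil, append_nil]

theorem cutPos_of_length_le {k : ℕ} (hk : ws.length ≤ k) : ws.cutPos k = ws.flatten.length := by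
  rw [cutPos, take_of_length_le hk]

theorem cutPos_mono : Monotone ws.cutPos := by
  intro k m hkm
  obtain ⟨d, rfl⟩ := Nat.exists_eq_add_of_le hkm
  rw [cutPos_add]
  omega

theorem cutPos_lt_cutPos (hne : [] ∉ ws) {k m : ℕ} (hkm : k < m) (hm : m ≤ ws.length) :
    ws.cutPos k < ws.cutPos m := by
  have hk : k < ws.length := by omega
  have hpos : 0 < ws[k].length := length_pos_iff.mpr fun h => hne (h ▸ getElem_mem hk)
  calc ws.cutPos k < ws.cutPos (k + 1) := by rw [cutPos_succ hk]; omega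
    _ ≤ ws.cutPos m := cutPos_mono hkm

theorem flatten_eq_take_append_drop (k : ℕ) :
    ws.flatten = (ws.take k).flatten ++ (ws.drop k).flatten := by
  rw [← flatten_append, take_append_drop]

theorem take_cutPos (k : ℕ) : ws.flatten.take (ws.cutPos k) = (ws.take k).flatten := by
  rw [flatten_eq_take_append_drop k]
  exact take_left' rfl

theorem drop_cutPos (k : ℕ) : ws.flatten.drop (ws.cutPos k) = (ws.drop k).flatten := by
  rw [flatten_eq_take_append_drop k]
  exact drop_left' rfl

theorem getLast?_getElem_eq {k : ℕ} (hk : k < ws.length) (hne : ws[k] ≠ []) :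
    ws[k].getLast? = ws.flatten[ws.cutPos (k + 1) - 1]? := by
  have hc : ws.flatten.take (ws.cutPos (k + 1)) = (ws.take k).flatten ++ ws[k] := by
    rw [take_cutPos, take_add_one, getElem?_eq_getElem hk, Option.toList_some, flatten_append,
      flatten_singleton]
  have hpos : 0 < ws.cutPos (k + 1) := by
    rw [cutPos_succ hk]
    have := length_pos_iff.mpr hne
    omega
  have hle : ws.cutPos (k + 1) ≤ ws.flatten.length := by
    rw [← cutPos_of_length_le le_rfl]
    exact cutPos_mono (by omega)
  rw [← getLast?_append_of_ne_nil (ws.take k).flatten hne, ← hc, getLast?_eq_getElem?,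
    getElem?_take, length_take, if_pos (by omega), min_eq_left hle]

theorem length_flatten_le {N : ℕ} (h : ∀ u ∈ ws, u.length ≤ N) :
    ws.flatten.length ≤ ws.length * N := by
  rw [length_flatten, ← length_map (f := length), ← smul_eq_mul]
  exact sum_le_card_nsmul _ _ (by simpa using h)

theorem drop_add_length {l x y : List γ} {p : ℕ} (h : l.drop p = x ++ y) :
    l.drop (p + x.length) = y := by
  rw [← drop_drop, h, drop_left]

theorem getElem?_add_length_of_prefix_drop {l x : List γ} {p i : ℕ} (hsq : x ++ x <+: l.drop p)
    (hi : p ≤ i) (hix : i < p + x.length) : l[i + x.length]? = l[i]? := by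
  obtain ⟨r, hr⟩ := hsq
  have e : ∀ j, l[p + j]? = (x ++ x ++ r)[j]? := fun j => by rw [hr, getElem?_drop]
  rw [show i + x.length = p + (i - p + x.length) by omega, show i = p + (i - p) by omega, e, e,
    append_assoc, getElem?_append_right (by omega), getElem?_append_left (by simp; omega),
    getElem?_append_left (by omega)]
  simp

theorem getElem?_eq_of_take_drop_prefix {l : List γ} {i m d s : ℕ}
    (h : (l.drop i).take d <+: l.drop m) (hs : s < d) (his : i + s < l.length) :
    l[i + s]? = l[m + s]? := by
  obtain ⟨z, hz⟩ := h
  rw [← getElem?_drop, ← getElem?_drop, ← hz, getElem?_append_left (by simp; omega),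
    getElem?_take, if_pos hs]

theorem exists_maximal_run {p L k : ℕ} (hk : k < ws.length) (hkp : p ≤ ws.cutPos k)
    (hkx : ws.cutPos (k + 1) ≤ p + L) :
    ∃ k0 k1, k0 < k1 ∧ k1 ≤ ws.length ∧ p ≤ ws.cutPos k0 ∧ (∀ j < k0, ws.cutPos j < p) ∧
      ws.cutPos k1 ≤ p + L ∧ (k1 < ws.length → p + L < ws.cutPos (k1 + 1)) := by
  classical
  have hex : ∃ j, p ≤ ws.cutPos j := ⟨k, hkp⟩
  let P j := ws.cutPos j ≤ p + L
  refine ⟨Nat.find hex, Nat.findGreatest P ws.length, ?_, Nat.findGreatest_le _, Nat.find_spec hex,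
    fun j hj => not_le.mp (Nat.find_min hex hj),
    Nat.findGreatest_spec (P := P) (Nat.zero_le _) (by simp [P]),
    fun h => not_le.mp (Nat.findGreatest_is_greatest (P := P) (lt_add_one _) h)⟩
  exact (Nat.find_min' hex hkp).trans_lt (Nat.le_findGreatest (P := P) hk hkx)

theorem getLast?_getElem_sub_one_eq (hne : [] ∉ ws) {x : List γ} {p : ℕ}
    (hsq : x ++ x <+: ws.flatten.drop p) {k0 k1 : ℕ} (hk0pos : 0 < k0) (hk0n : k0 ≤ ws.length)
    (hk0 : p < ws.cutPos k0) (hk0x : ws.cutPos k0 ≤ p + x.length) (hk1 : k1 < ws.length)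
    (hcut : ws.cutPos (k1 + 1) = ws.cutPos k0 + x.length) :
    ws[k0 - 1].getLast? = ws[k1].getLast? := by
  rw [getLast?_getElem_eq _ (fun h => hne (h ▸ getElem_mem _)),
    getLast?_getElem_eq _ (fun h => hne (h ▸ getElem_mem _)), Nat.sub_add_cancel hk0pos, hcut,
    show ws.cutPos k0 + x.length - 1 = ws.cutPos k0 - 1 + x.length by omega,
    getElem?_add_length_of_prefix_drop hsq (by omega) (by omega)]

theorem length_le_three_of_no_block_in_halves {p L : ℕ}
    (hl : p < ws.cutPos 1) (hr : ws.cutPos (ws.length - 1) < p + 2 * L)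
    (h1st : ∀ k < ws.length, p ≤ ws.cutPos k → ws.cutPos (k + 1) ≤ p + L → False)
    (h2nd : ∀ k < ws.length, p + L ≤ ws.cutPos k → ws.cutPos (k + 1) ≤ p + 2 * L → False) :
    ws.length ≤ 3 := by
  by_contra! hn
  have h3 : ws.cutPos (2 + 1) ≤ ws.cutPos (ws.length - 1) := cutPos_mono (by omega)
  by_cases h2 : ws.cutPos 2 ≤ p + L
  · exact h1st 1 (by omega) hl.le h2
  · exact h2nd 2 (by omega) (by omega) (by omega)

end List

open List

theorem SqFreeWord.of_infix {α : Type*} {u w : List α} (hw : SqFreeWord w) (huw : u <:+: w) :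
    SqFreeWord u :=
  fun x hx hxx => hw x hx (hxx.trans huw)

theorem not_sqFreeWord_of_getElem?_eq {α : Type*} {w : List α} {i p : ℕ} (hp : 0 < p)
    (hw : i + 2 * p ≤ w.length) (heq : ∀ s < p, w[i + s]? = w[i + p + s]?) : ¬ SqFreeWord w := by
  set x := (w.drop i).take p with hx
  have hxx : x ++ x = (w.drop i).take (p + p) := by
    rw [take_add]
    congr 1
    refine ext_getElem? fun s => ?_
    simp only [hx, getElem?_take, getElem?_drop]
    split_ifs with hs
    · rw [heq s hs, add_assoc]
    · rfl
  have hx0 : x ≠ [] := ne_nil_of_length_pos (by simp [hx]; omega)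
  exact fun hsf => hsf x hx0 (hxx ▸ (take_prefix _ _).isInfix.trans (drop_suffix i w).isInfix)

theorem exists_trimmed_square {β γ : Type*} {R : β → List γ → Prop} {w : List β}
    {ws : List (List γ)} (hf : Forall₂ R w ws) {x : List γ} (hx : x ≠ [])
    (hsq : x ++ x <:+: ws.flatten) :
    ∃ (w' : List β) (ws' : List (List γ)) (p : ℕ), w' <:+: w ∧ Forall₂ R w' ws' ∧
      x ++ x <+: ws'.flatten.drop p ∧ p < ws'.cutPos 1 ∧
      ws'.cutPos (ws'.length - 1) < p + 2 * x.length := by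
  obtain ⟨p, hp⟩ : ∃ p, x ++ x <+: ws.flatten.drop p := by
    obtain ⟨s, r, hF⟩ := hsq
    exact ⟨s.length, r, by rw [← hF]; simp⟩
  clear hsq
  have hL := length_pos_iff.mpr hx
  obtain ⟨n, hn⟩ : ∃ n, ws.length = n := ⟨_, rfl⟩
  induction n using Nat.strong_induction_on generalizing w ws p with
  | _ n ih =>
  have hlen : p + 2 * x.length ≤ ws.flatten.length := by
    have := hp.length_le
    simp only [length_append, length_drop] at this
    omega
  have hn0 : 0 < n := by
    rw [← hn, length_pos_iff]
    rintro rfl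
    simp only [flatten_nil, length_nil] at hlen
    omega
  by_cases hl : ws.cutPos 1 ≤ p
  · obtain ⟨w', ws', q, hw', hrest⟩ := ih (n - 1) (by omega) (forall₂_drop 1 hf)
      (p := p - ws.cutPos 1) (by rw [← drop_cutPos, drop_drop, Nat.add_sub_cancel' hl]; exact hp)
      (by rw [length_drop, hn])
    exact ⟨w', ws', q, hw'.trans (drop_suffix 1 w).isInfix, hrest⟩
  by_cases hr : p + 2 * x.length ≤ ws.cutPos (n - 1)
  · obtain ⟨w', ws', q, hw', hrest⟩ := ih (n - 1) (by omega) (forall₂_take (n - 1) hf) (p := p)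
      (by rw [← take_cutPos, drop_take, prefix_take_iff]; exact ⟨hp, by simp; omega⟩)
      (by rw [length_take, hn]; omega)
    exact ⟨w', ws', q, hw'.trans (take_prefix _ w).isInfix, hrest⟩
  exact ⟨w, ws, p, infix_refl w, hf, hp, not_le.mp hl, hn ▸ not_le.mp hr⟩

def CommaFree {α : Type*} (I : Set (List α)) : Prop :=
  ∀ u ∈ I, ∀ v ∈ I, ∀ w ∈ I, ∀ x y : List α, x ≠ [] → y ≠ [] → u ++ v ≠ x ++ w ++ y

namespace CommaFree

variable {α : Type*} {I : Set (List α)}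

theorem nil_notMem (hI : CommaFree I) {u : List α} (hu : u ∈ I) (hu0 : u ≠ []) : [] ∉ I :=
  fun h0 => hI u hu u hu [] h0 u u hu0 hu0 (by simp)

theorem eq_of_infix (hI : CommaFree I) (h0 : [] ∉ I) {u v : List α} (hu : u ∈ I) (hv : v ∈ I)
    (huv : u <:+: v) : u = v := by
  obtain ⟨s, s', rfl⟩ := huv
  have hv0 : s ++ u ++ s' ≠ [] := ne_of_mem_of_not_mem hv h0
  obtain rfl : s = [] := by
    by_contra hs
    exact hI _ hv _ hv u hu s (s' ++ (s ++ u ++ s')) hs (by simp_all) (by simp)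
  obtain rfl : s' = [] := by
    by_contra hs'
    exact hI _ hv _ hv u hu (u ++ s') s' (by simpa using hv0) hs' (by simp)
  simp

theorem eq_zero_of_prefix_drop (hI : CommaFree I) (h0 : [] ∉ I) {v B : List α}
    {ws : List (List α)} (hv : v ∈ I) (hB : B ∈ I) (hws : ∀ u ∈ ws, u ∈ I) {q : ℕ}
    (hq : q < v.length) (hocc : B <+: (v ++ ws.flatten).drop q) : q = 0 := by
  -- Either `B` ends inside `v`, so it is an infix of `v`, or it runs into the next block `v'`;
  -- then `v'` lies inside `B`, or `B` lies properly inside `v ++ v'`.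
  by_contra hq0
  rw [drop_append_of_le_length hq.le] at hocc
  have hdrop : (v.drop q).length = v.length - q := length_drop
  rcases le_or_gt B.length (v.drop q).length with hle | hlt
  · have hBv : B <:+: v :=
      (prefix_of_prefix_length_le hocc (prefix_append _ _) hle).isInfix.trans
        (drop_suffix q v).isInfix
    have := congrArg length (hI.eq_of_infix h0 hB hv hBv)
    omega
  obtain ⟨z, hz⟩ := prefix_of_prefix_length_le (prefix_append _ _) hocc hlt.le
  have hzws : z <+: ws.flatten := (prefix_append_right_inj _).mp (hz ▸ hocc)
  have hz0 : z.length ≠ 0 := by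
    have := congrArg length hz
    simp only [length_append] at this
    omega
  obtain _ | ⟨v', ws'⟩ := ws
  · simp_all
  rw [flatten_cons] at hzws
  have hv' : v' ∈ I := hws v' mem_cons_self
  rcases le_or_gt v'.length z.length with hle' | hlt'
  · have hv'B : v' <:+: B :=
      (prefix_of_prefix_length_le (prefix_append _ _) hzws hle').isInfix.trans
        (hz ▸ suffix_append _ _).isInfix
    have := congrArg length (hI.eq_of_infix h0 hv' hB hv'B)
    simp only [← hz, length_append] at this
    omega
  obtain ⟨y, hy⟩ := prefix_of_prefix_length_le hzws (prefix_append _ _) hlt'.le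
  refine hI v hv v' hv' B hB (v.take q) y (by rw [← length_pos_iff, length_take]; omega)
    (by rintro rfl; simp [← hy] at hlt') ?_
  rw [← hy, ← hz]
  simp only [append_assoc]
  rw [← append_assoc (take q v), take_append_drop]

theorem exists_cutPos_eq (hI : CommaFree I) (h0 : [] ∉ I) {ws : List (List α)}
    (hws : ∀ u ∈ ws, u ∈ I) {B : List α} (hB : B ∈ I) {q : ℕ}
    (hocc : B <+: ws.flatten.drop q) : ∃ m, ws.cutPos m = q := by
  induction ws generalizing q with
  | nil => simp_all
  | cons v ws ih =>
    rcases lt_or_ge q v.length with hq | hq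
    · exact ⟨0, by rw [cutPos_zero, hI.eq_zero_of_prefix_drop h0 (hws v mem_cons_self) hB
        (fun u hu => hws u (mem_cons_of_mem v hu)) hq hocc]⟩
    rw [flatten_cons, drop_append, drop_eq_nil_of_le hq, nil_append] at hocc
    obtain ⟨m, hm⟩ := ih (fun u hu => hws u (mem_cons_of_mem v hu)) hocc
    exact ⟨m + 1, by rw [cutPos_cons_succ]; omega⟩

theorem prefix_of_flatten_prefix (hI : CommaFree I) (h0 : [] ∉ I) {M ws : List (List α)}
    (hM : ∀ u ∈ M, u ∈ I) (hws : ∀ u ∈ ws, u ∈ I) (h : M.flatten <+: ws.flatten) : M <+: ws := by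
  induction M generalizing ws with
  | nil => exact nil_prefix
  | cons B M ih =>
    have hB := hM B mem_cons_self
    obtain _ | ⟨v, ws⟩ := ws
    · simp_all
    have hv := hws v mem_cons_self
    obtain rfl : B = v := by
      rcases prefix_or_prefix_of_prefix ((prefix_append B _).trans h) (prefix_append v _)
        with hBv | hvB
      · exact hI.eq_of_infix h0 hB hv hBv.isInfix
      · exact (hI.eq_of_infix h0 hv hB hvB.isInfix).symm
    rw [flatten_cons, flatten_cons, prefix_append_right_inj] at h
    exact cons_prefix_cons.mpr ⟨rfl, ih (fun u hu => hM u (mem_cons_of_mem B hu))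
      (fun u hu => hws u (mem_cons_of_mem B hu)) h⟩

theorem exists_cutPos_eq_of_flatten_prefix (hI : CommaFree I) (h0 : [] ∉ I)
    {ws M : List (List α)} (hws : ∀ u ∈ ws, u ∈ I) (hM : ∀ u ∈ M, u ∈ I) (hM0 : M ≠ [])
    {q : ℕ} (hocc : M.flatten <+: ws.flatten.drop q) :
    ∃ m, ws.cutPos m = q ∧ M <+: ws.drop m := by
  obtain _ | ⟨B, M'⟩ := M
  · contradiction
  obtain ⟨m, rfl⟩ :=
    hI.exists_cutPos_eq h0 hws (hM B mem_cons_self) ((prefix_append B _).trans hocc)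
  rw [drop_cutPos] at hocc
  exact ⟨m, rfl, hI.prefix_of_flatten_prefix h0 hM (fun u hu => hws u (mem_of_mem_drop hu)) hocc⟩

theorem exists_cutPos_add_eq (hI : CommaFree I) (h0 : [] ∉ I) {ws : List (List α)}
    (hws : ∀ u ∈ ws, u ∈ I) {p p' : ℕ} {x y y' : List α} (hp : ws.flatten.drop p = x ++ y)
    (hp' : ws.flatten.drop p' = x ++ y') {i j : ℕ} (hij : i < j) (hj : j ≤ ws.length)
    (hi : p ≤ ws.cutPos i) (hjx : ws.cutPos j ≤ p + x.length) :
    ∃ m, ws.cutPos m + p = ws.cutPos i + p' ∧ (ws.drop i).take (j - i) <+: ws.drop m := by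
  set M := (ws.drop i).take (j - i)
  have hMlen : ws.cutPos j = ws.cutPos i + M.flatten.length := by
    rw [← cutPos_add, Nat.add_sub_cancel' hij.le]
  have hM : M.flatten <+: x.drop (ws.cutPos i - p) ++ y := by
    rw [← drop_append_of_le_length (by omega), ← hp, drop_drop, Nat.add_sub_cancel' hi,
      drop_cutPos]
    exact (take_prefix _ _).flatten
  have hM' : M.flatten <+: ws.flatten.drop (p' + (ws.cutPos i - p)) := by
    rw [← drop_drop, hp', drop_append_of_le_length (by omega)]
    exact (prefix_of_prefix_length_le hM (prefix_append _ _) (by rw [length_drop]; omega)).trans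
      (prefix_append _ _)
  obtain ⟨m, hm, hpre⟩ := hI.exists_cutPos_eq_of_flatten_prefix h0 hws
    (fun u hu => hws u (mem_of_mem_drop (mem_of_mem_take hu)))
    (ne_nil_of_length_pos (by simp; omega)) hM'
  exact ⟨m, by omega, hpre⟩

theorem le_add_one_of_cutPos_eq (hI : CommaFree I) (h0 : [] ∉ I) {ws : List (List α)}
    (hws : ∀ u ∈ ws, u ∈ I) {x : List α} {p : ℕ} (hsq : x ++ x <+: ws.flatten.drop p)
    {k0 k1 m : ℕ} (hk0min : ∀ j < k0, ws.cutPos j < p) (hk0 : ws.cutPos k0 ≤ p + x.length)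
    (hk1 : p + x.length < ws.cutPos (k1 + 1)) (hm : ws.cutPos m = ws.cutPos k0 + x.length)
    (hmn : m ≤ ws.length) : m ≤ k1 + 1 := by
  -- Otherwise block `k1 + 1` lies in the second half, and its copy in the first half would start
  -- at a block boundary strictly between `p` and `ws.cutPos k0`.
  by_contra! hlt
  obtain ⟨r, hr⟩ := hsq
  have hp : ws.flatten.drop p = x ++ (x ++ r) := by rw [← hr, append_assoc]
  have hne : [] ∉ ws := fun h => h0 (hws _ h)
  have hk12 : ws.cutPos (k1 + 1) < ws.cutPos (k1 + 1 + 1) :=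
    cutPos_lt_cutPos hne (lt_add_one _) (by omega)
  have hk2m : ws.cutPos (k1 + 1 + 1) ≤ ws.cutPos m := cutPos_mono (by omega)
  obtain ⟨m', hm', -⟩ := hI.exists_cutPos_add_eq h0 hws (drop_add_length hp) hp
    (lt_add_one (k1 + 1)) (by omega) hk1.le (by omega)
  have := hk0min m' (cutPos_mono.reflect_lt (by omega : ws.cutPos m' < ws.cutPos k0))
  omega

theorem exists_block_in_first_half (hI : CommaFree I) (h0 : [] ∉ I) {ws : List (List α)}
    (hws : ∀ u ∈ ws, u ∈ I) {x : List α} {p k : ℕ} (hsq : x ++ x <+: ws.flatten.drop p)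
    (hk : k < ws.length) (hkp : p + x.length ≤ ws.cutPos k)
    (hkx : ws.cutPos (k + 1) ≤ p + 2 * x.length) :
    ∃ m < ws.length, p ≤ ws.cutPos m ∧ ws.cutPos (m + 1) ≤ p + x.length := by
  obtain ⟨r, hr⟩ := hsq
  have hp : ws.flatten.drop p = x ++ (x ++ r) := by rw [← hr, append_assoc]
  obtain ⟨m, hm, hrun⟩ := hI.exists_cutPos_add_eq h0 hws (drop_add_length hp) hp
    (lt_add_one k) hk hkp (by omega)
  have hmk := getElem?_eq_of_take_drop_prefix hrun (s := 0) (by omega) hk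
  rw [add_zero, add_zero, getElem?_eq_getElem hk, eq_comm, List.getElem?_eq_some_iff] at hmk
  obtain ⟨hmn, hmk⟩ := hmk
  refine ⟨m, hmn, by omega, ?_⟩
  rw [cutPos_succ hmn, hmk]
  rw [cutPos_succ hk] at hkx
  omega

end CommaFree

section Substitution

variable {α : Type*} {h : α → Set (List α)} {w : List α} {ws : List (List α)}

theorem commaFree_iUnion
    (h1 : ∀ (a b c : α) (u v w : List α), u ∈ h a → v ∈ h b → w ∈ h c →
      ∀ x y : List α, x ≠ [] → y ≠ [] → u ++ v ≠ x ++ w ++ y) :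
    CommaFree (⋃ a, h a) := by
  intro u hu v hv w hw
  obtain ⟨a, hu⟩ := Set.mem_iUnion.mp hu
  obtain ⟨b, hv⟩ := Set.mem_iUnion.mp hv
  obtain ⟨c, hw⟩ := Set.mem_iUnion.mp hw
  exact h1 a b c u v w hu hv hw

theorem mem_iUnion_of_forall₂ (hf : Forall₂ (fun a u => u ∈ h a) w ws) :
    ∀ u ∈ ws, u ∈ ⋃ a, h a := by
  induction hf with
  | nil => simp
  | cons hau _ ih => exact forall_mem_cons.mpr ⟨Set.mem_iUnion.mpr ⟨_, hau⟩, ih⟩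

theorem getElem?_eq_of_getLast?_eq
    (h3 : ∀ (a b : α) (u v : List α), a ≠ b → u ∈ h a → v ∈ h b → u.getLast? ≠ v.getLast?)
    (hf : Forall₂ (fun a u => u ∈ h a) w ws) {i j : ℕ} (hi : i < ws.length) (hj : j < ws.length)
    (heq : ws[i].getLast? = ws[j].getLast?) : w[i]? = w[j]? := by
  have hl := hf.length_eq
  rw [getElem?_eq_getElem (hl ▸ hi), getElem?_eq_getElem (hl ▸ hj)]
  by_contra hne
  exact h3 _ _ _ _ (fun h => hne (congrArg some h)) (hf.get (hl ▸ hi) hi) (hf.get (hl ▸ hj) hj) heq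

theorem not_sqFreeWord_of_block_in_first_half (hI : CommaFree (⋃ a, h a))
    (h0 : [] ∉ ⋃ a, h a)
    (h3 : ∀ (a b : α) (u v : List α), a ≠ b → u ∈ h a → v ∈ h b → u.getLast? ≠ v.getLast?)
    (hf : Forall₂ (fun a u => u ∈ h a) w ws) {x : List α} {p k : ℕ}
    (hsq : x ++ x <+: ws.flatten.drop p) (hk : k < ws.length) (hkp : p ≤ ws.cutPos k)
    (hkx : ws.cutPos (k + 1) ≤ p + x.length) : ¬ SqFreeWord w := by
  have hws := mem_iUnion_of_forall₂ hf
  have hne : [] ∉ ws := fun h => h0 (hws _ h)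
  have hwn := hf.length_eq
  obtain ⟨k0, k1, hk01, hk1n, hk0, hk0min, hk1, hk1max⟩ := exists_maximal_run hk hkp hkx
  have hk0k1 := cutPos_lt_cutPos hne hk01 hk1n
  obtain ⟨r, hr⟩ := hsq
  have hp : ws.flatten.drop p = x ++ (x ++ r) := by rw [← hr, append_assoc]
  obtain ⟨m, hm, hrun⟩ := hI.exists_cutPos_add_eq h0 hws hp (drop_add_length hp) hk01 hk1n hk0 hk1
  have hmn : m + (k1 - k0) ≤ ws.length := by
    have := hrun.length_le
    simp only [length_take, length_drop] at this
    omega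
  have hshift : ∀ s < k1 - k0, w[k0 + s]? = w[m + s]? := fun s hs => by
    have := getElem?_eq_of_take_drop_prefix hrun hs (by omega)
    rw [getElem?_eq_getElem (by omega), getElem?_eq_getElem (by omega)] at this
    exact getElem?_eq_of_getLast?_eq h3 hf (by omega) (by omega) (by rw [Option.some.inj this])
  have hkm : k0 < m := cutPos_mono.reflect_lt (by omega : ws.cutPos k0 < ws.cutPos m)
  have hk0x : ws.cutPos k0 ≤ p + x.length := by omega
  -- The run of blocks `k0, …, k1 - 1` reappears at `m`. If `m ≤ k1`, `w` has a square of period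
  -- `m - k0`; if `m = k1 + 1`, blocks `k0 - 1` and `k1` end in the same letter, which extends the
  -- runs to a square of period `k1 - k0 + 1`.
  rcases (hI.le_add_one_of_cutPos_eq h0 hws ⟨r, hr⟩ hk0min hk0x (hk1max (by omega)) (m := m)
    (by omega) (by omega)).lt_or_eq with hmk | rfl
  · refine not_sqFreeWord_of_getElem?_eq (i := k0) (p := m - k0) (by omega) (by omega)
      fun s hs => ?_
    rw [hshift s (by omega), Nat.add_sub_cancel' hkm.le]
  · have hk0p : p < ws.cutPos k0 := by have := hk1max (by omega); omega
    have hk0pos : 0 < k0 := Nat.pos_of_ne_zero fun h0 => by simp [h0] at hk0p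
    have hlast := getElem?_eq_of_getLast?_eq h3 hf (by omega) (by omega)
      (getLast?_getElem_sub_one_eq hne ⟨r, hr⟩ hk0pos (by omega) hk0p hk0x (k1 := k1) (by omega)
        (by omega))
    refine not_sqFreeWord_of_getElem?_eq (i := k0 - 1) (p := k1 - k0 + 1) (by omega) (by omega)
      fun s hs => ?_
    rcases s with _ | s
    · simpa [show k0 - 1 + (k1 - k0 + 1) = k1 by omega] using hlast
    · rw [show k0 - 1 + (s + 1) = k0 + s by omega, hshift s (by omega)]
      congr 1
      omega

end Substitution

theorem stmt6_general {α : Type*} (h : α → Set (List α))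
    (h1 : ∀ (a b c : α) (u v w : List α), u ∈ h a → v ∈ h b → w ∈ h c →
      ∀ x y : List α, x ≠ [] → y ≠ [] → u ++ v ≠ x ++ w ++ y)
    (h3 : ∀ (a b : α) (u v : List α), a ≠ b → u ∈ h a → v ∈ h b →
      u.getLast? ≠ v.getLast?)
    (h4 : ∀ w : List α, w.length ≤ 8 → SqFreeWord w →
      ∀ ws : List (List α), List.Forall₂ (fun a u => u ∈ h a) w ws →
      ∀ x : List α, x ≠ [] → x.length ≤ 52 → ¬ (x ++ x) <:+: ws.flatten)
    (h5 : ∀ (a : α) (u : List α), u ∈ h a → u.length ≤ 18) :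
    ∀ w : List α, SqFreeWord w → ∀ ws : List (List α),
      List.Forall₂ (fun a u => u ∈ h a) w ws → SqFreeWord ws.flatten := by
  intro w hw ws hf x hx hxx
  obtain ⟨w', ws', p, hw', hf', hsq, hl, hr⟩ := exists_trimmed_square hf hx hxx
  have hw'sf := hw.of_infix hw'
  have hI := commaFree_iUnion h1
  have hws := mem_iUnion_of_forall₂ hf'
  have h0 : [] ∉ ⋃ a, h a := by
    obtain ⟨u, hu, hu0⟩ : ∃ u ∈ ws', u ≠ [] := by
      by_contra! hnil
      exact hx (by simpa [flatten_eq_nil_iff.mpr hnil] using hsq)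
    exact hI.nil_notMem (hws u hu) hu0
  by_cases hfirst : ∃ k < ws'.length, p ≤ ws'.cutPos k ∧ ws'.cutPos (k + 1) ≤ p + x.length
  · obtain ⟨k, hk, hkp, hkx⟩ := hfirst
    exact not_sqFreeWord_of_block_in_first_half hI h0 h3 hf' hsq hk hkp hkx hw'sf
  have hn : ws'.length ≤ 3 := length_le_three_of_no_block_in_halves hl hr
    (fun k hk hkp hkx => hfirst ⟨k, hk, hkp, hkx⟩)
    (fun k hk hkp hkx => hfirst (hI.exists_block_in_first_half h0 hws hsq hk hkp hkx))
  have hF : ws'.flatten.length ≤ ws'.length * 18 := length_flatten_le fun u hu => by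
    obtain ⟨a, hu⟩ := Set.mem_iUnion.mp (hws u hu)
    exact h5 a u hu
  have hsqlen := hsq.length_le
  simp only [length_append, length_drop] at hsqlen
  have := hf'.length_eq
  exact h4 w' (by omega) hw'sf ws' hf' x hx (by omega)
    (hsq.isInfix.trans (drop_suffix p _).isInfix)

theorem stmt6 {α : Type*} (h : α → Set (List α))
    (h1 : ∀ (a b c : α) (u v w : List α), u ∈ h a → v ∈ h b → w ∈ h c →
      ∀ x y : List α, x ≠ [] → y ≠ [] → u ++ v ≠ x ++ w ++ y)
    (h2 : ∀ (a b : α) (u v : List α), a ≠ b → u ∈ h a → v ∈ h b →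
      ¬ (u <+: v ∧ u ≠ v))
    (h3 : ∀ (a b : α) (u v : List α), a ≠ b → u ∈ h a → v ∈ h b →
      u.getLast? ≠ v.getLast?)
    (h4 : ∀ w : List α, w.length ≤ 8 → SqFreeWord w →
      ∀ ws : List (List α), List.Forall₂ (fun a u => u ∈ h a) w ws →
      ∀ x : List α, x ≠ [] → x.length ≤ 52 → ¬ (x ++ x) <:+: ws.flatten)
    (h5 : ∀ (a : α) (u : List α), u ∈ h a → u.length ≤ 18) :
    ∀ w : List α, SqFreeWord w → ∀ ws : List (List α),
      List.Forall₂ (fun a u => u ∈ h a) w ws → SqFreeWord ws.flatten :=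
  stmt6_general h h1 h3 h4 h5
end

section
/- Suppose u is a square-free word with a conducting sequence β such that u ⧢_β u is square-free, and write u ⧢_β u = u₁u₁'u₂u₂'⋯uₙuₙ' where u = u₁u₂⋯uₙ = u₁'u₂'⋯uₙ' is the decomposition induced by β. If h is a square-free morphism, then h(u) can be shuffled with itself to yield the square-free word h(u₁)h(u₁')h(u₂)h(u₂')⋯h(uₙ)h(uₙ'); that is, there exists a conducting sequence β' with h(u) ⧢_{β'} h(u) = h(u ⧢_β u) square-free. -/
def expandβ {α γ : Type*} (h : α → List γ) : List Bool → List α → List α → List Bool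
  | [], _, _ => []
  | (false :: β), (a :: u), v => List.replicate (h a).length false ++ expandβ h β u v
  | (false :: _), [], _ => []
  | (true :: β), u, (a :: v) => List.replicate (h a).length true ++ expandβ h β u v
  | (true :: _), _, [] => []

lemma shuffle_rep_false {α : Type*} (w : List α) (β : List Bool) (u v : List α) :
    condShuffle (List.replicate w.length false ++ β) (w ++ u) v
      = w ++ condShuffle β u v := by
  induction w with
  | nil => simp
  | cons a w ih => simpa [condShuffle, List.replicate_succ] using ih

lemma shuffle_rep_true {α : Type*} (w : List α) (β : List Bool) (u v : List α) :
    condShuffle (List.replicate w.length true ++ β) u (w ++ v)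
      = w ++ condShuffle β u v := by
  induction w generalizing u with
  | nil => simp
  | cons a w ih => simpa [condShuffle, List.replicate_succ] using ih u

lemma expand_main {α γ : Type*} (h : α → List γ) (β : List Bool) :
    ∀ u v : List α, β.count false = u.length → β.count true = v.length →
      condShuffle (expandβ h β u v) ((u.map h).flatten) ((v.map h).flatten)
        = ((condShuffle β u v).map h).flatten ∧
      (expandβ h β u v).count false = ((u.map h).flatten).length ∧
      (expandβ h β u v).count true = ((v.map h).flatten).length := by
  induction β with
  | nil =>
    intro u v h0 h1
    simp at h0 h1
    rw [eq_comm, List.length_eq_zero_iff] at h0 h1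
    subst h0; subst h1
    simp [expandβ, condShuffle]
  | cons b β ih =>
    intro u v h0 h1
    cases b with
    | false =>
      cases u with
      | nil => simp at h0
      | cons a u =>
        simp [List.count_cons] at h0 h1
        obtain ⟨e1, e2, e3⟩ := ih u v h0 h1
        refine ⟨?_, ?_, ?_⟩
        · simp only [expandβ, List.map_cons, List.flatten_cons, condShuffle]
          rw [shuffle_rep_false, e1]
        · simp [expandβ, List.count_append, e2]
        · simp [expandβ, List.count_append, e3, List.count_replicate]
    | true =>
      cases v with
      | nil => simp at h1
      | cons a v =>
        simp [List.count_cons] at h0 h1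
        obtain ⟨e1, e2, e3⟩ := ih u v h0 h1
        refine ⟨?_, ?_, ?_⟩
        · simp only [expandβ, List.map_cons, List.flatten_cons, condShuffle]
          rw [shuffle_rep_true, e1]
        · simp [expandβ, List.count_append, e2, List.count_replicate]
        · simp [expandβ, List.count_append, e3]

theorem stmt7 {α γ : Type*} (h : α → List γ)
    (hsf : ∀ v : List α, SqFreeWord v → SqFreeWord (v.map h).flatten)
    (u : List α) (β : List Bool)
    (hu : SqFreeWord u) (hc0 : β.count false = u.length)
    (hc1 : β.count true = u.length)
    (hsh : SqFreeWord (condShuffle β u u)) :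
    ∃ β' : List Bool,
      β'.count false = ((u.map h).flatten).length ∧
      β'.count true = ((u.map h).flatten).length ∧
      condShuffle β' (u.map h).flatten (u.map h).flatten
        = ((condShuffle β u u).map h).flatten ∧
      SqFreeWord (condShuffle β' (u.map h).flatten (u.map h).flatten) := by
  obtain ⟨e1, e2, e3⟩ := expand_main h β u u hc0 hc1
  exact ⟨expandβ h β u u, e2, e3, e1, e1 ▸ hsf _ hsh⟩
end

section
/- For each i ∈ {0,1,2,3}, the word σ(i) given by σ(0)=010210120102120210120212, σ(1)=012101202101210201202102, σ(2)=012102010210121020120212, σ(3)=012102120102101202120102 is square-free and equals ρ(i) ⧢_{βᵢ} ρ(i), where ρ(0)=010210120212, ρ(1)=012101202102, ρ(2)=012102010212, ρ(3)=012102120102, and β₀=000000001100001111111111, β₁=000000000011110011111111, β₂=000000110100100111101111, β₃=000000001101001011111111. -/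
lemma sqfree_of_check {α : Type*} (w : List α)
    (h : ∀ i < w.length, ∀ k < w.length, 0 < k →
      (w.drop i).take k ≠ (w.drop (i + k)).take k) : SqFreeWord w := by
  rintro x hx ⟨s, t, hst⟩
  have hk : 0 < x.length := List.length_pos_iff.mpr hx
  have hlen : s.length + (x.length + x.length + t.length) = w.length := by
    rw [← hst]; simp [List.length_append]; ring
  have hi : s.length < w.length := by omega
  have hkl : x.length < w.length := by omega
  apply h s.length hi x.length hkl hk
  have h1 : w.drop s.length = x ++ x ++ t := by
    rw [← hst, List.append_assoc, List.drop_left]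
  have h2 : w.drop (s.length + x.length) = x ++ t := by
    rw [← List.drop_drop, h1, List.append_assoc, List.drop_left]
  rw [h1, h2, List.append_assoc, List.take_left, List.take_left]

theorem stmt10 :
    SqFreeWord ([0,1,0,2,1,0,1,2,0,1,0,2,1,2,0,2,1,0,1,2,0,2,1,2] : List (Fin 3)) ∧
    condShuffle [false,false,false,false,false,false,false,false,true,true,false,false,false,false,true,true,true,true,true,true,true,true,true,true] ([0,1,0,2,1,0,1,2,0,2,1,2] : List (Fin 3)) ([0,1,0,2,1,0,1,2,0,2,1,2] : List (Fin 3)) = [0,1,0,2,1,0,1,2,0,1,0,2,1,2,0,2,1,0,1,2,0,2,1,2] ∧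
    SqFreeWord ([0,1,2,1,0,1,2,0,2,1,0,1,2,1,0,2,0,1,2,0,2,1,0,2] : List (Fin 3)) ∧
    condShuffle [false,false,false,false,false,false,false,false,false,false,true,true,true,true,false,false,true,true,true,true,true,true,true,true] ([0,1,2,1,0,1,2,0,2,1,0,2] : List (Fin 3)) ([0,1,2,1,0,1,2,0,2,1,0,2] : List (Fin 3)) = [0,1,2,1,0,1,2,0,2,1,0,1,2,1,0,2,0,1,2,0,2,1,0,2] ∧
    SqFreeWord ([0,1,2,1,0,2,0,1,0,2,1,0,1,2,1,0,2,0,1,2,0,2,1,2] : List (Fin 3)) ∧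
    condShuffle [false,false,false,false,false,false,true,true,false,true,false,false,true,false,false,true,true,true,true,false,true,true,true,true] ([0,1,2,1,0,2,0,1,0,2,1,2] : List (Fin 3)) ([0,1,2,1,0,2,0,1,0,2,1,2] : List (Fin 3)) = [0,1,2,1,0,2,0,1,0,2,1,0,1,2,1,0,2,0,1,2,0,2,1,2] ∧
    SqFreeWord ([0,1,2,1,0,2,1,2,0,1,0,2,1,0,1,2,0,2,1,2,0,1,0,2] : List (Fin 3)) ∧
    condShuffle [false,false,false,false,false,false,false,false,true,true,false,true,false,false,true,false,true,true,true,true,true,true,true,true] ([0,1,2,1,0,2,1,2,0,1,0,2] : List (Fin 3)) ([0,1,2,1,0,2,1,2,0,1,0,2] : List (Fin 3)) = [0,1,2,1,0,2,1,2,0,1,0,2,1,0,1,2,0,2,1,2,0,1,0,2] := by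
  refine ⟨sqfree_of_check _ ?_, by decide, sqfree_of_check _ ?_, by decide,
    sqfree_of_check _ ?_, by decide, sqfree_of_check _ ?_, by decide⟩ <;> decide
end

section
/- The 4-uniform morphism α from {0,1,2}* to {0,1,2,3}* defined by α(0)=1013, α(1)=1023, α(2)=1032 is square-free: for every square-free word w over {0,1,2}, the image α(w) is square-free. Moreover, for every w, the image α(w) contains none of the factors 12, 20, 30. -/
def alphaM : Fin 3 → List (Fin 4)
  | 0 => [1,0,1,3]
  | 1 => [1,0,2,3]
  | 2 => [1,0,3,2]

/-! The letter 0 occurs in `α(w)` exactly at the positions `≡ 1 mod 4`, and two equal letters are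
never adjacent, so every square `xx` in `α(w)` has `4 ∣ |x|`. The third letters of `α(0), α(1), α(2)`
are `1, 2, 3`, so reading the third letter of each block inside such a square recovers a square of
`w`. The forbidden factors `12, 20, 30` already fail to occur in any `α(a) α(b)`, and every factor of
length two of `α(w)` occurs in one of these. -/

namespace List

variable {α : Type*}

theorem exists_getElem?_eq_of_append_self_infix {x l : List α} (h : x ++ x <:+: l) :
    ∃ k, k + 2 * x.length ≤ l.length ∧
      ∀ i (hi : i < x.length), l[k + i]? = some x[i] ∧ l[k + x.length + i]? = some x[i] := by
  obtain ⟨k, hlen, hk⟩ := infix_iff_getElem?.mp h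
  refine ⟨k, by simp only [length_append] at hlen; omega, fun i hi => ⟨?_, ?_⟩⟩
  · rw [Nat.add_comm, hk i (by simp; omega), getElem_append_left hi]
  · rw [show k + x.length + i = (x.length + i) + k by omega, hk _ (by simp; omega),
      getElem_append_right (by omega)]
    simp

theorem not_sqFreeWord_of_period {w : List α} {k n : ℕ} (hn : 0 < n)
    (hlen : k + 2 * n ≤ w.length) (hper : ∀ i < n, w[k + i]? = w[k + n + i]?) :
    ¬ SqFreeWord w := by
  intro hw
  refine hw ((w.drop k).take n) (by simp; omega) (infix_iff_getElem?.mpr ⟨k, ?_, fun i hi => ?_⟩)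
  · simp; omega
  · have hmin : min n (w.length - k) = n := by omega
    simp only [length_append, length_take, length_drop, hmin] at hi
    rw [← getElem?_eq_getElem, getElem?_append]
    simp only [length_take, length_drop, getElem?_take, getElem?_drop, hmin]
    by_cases hin : i < n
    · simp [hin, Nat.add_comm]
    · rw [if_neg hin, if_pos (by omega), hper _ (by omega)]
      congr 1
      omega

end List

theorem Option.eq_of_bind_eq {α β : Type*} {g : α → Option β} (hg : Function.Injective g)
    (hsome : ∀ a, g a ≠ none) {o o' : Option α} (h : o.bind g = o'.bind g) : o = o' := by
  cases o <;> cases o' <;> simp_all [hg.eq_iff, eq_comm]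

section UniformMorphism

variable {α β : Type*} {h : α → List β} {L : ℕ}

theorem length_flatten_map_of_uniform (hL : ∀ a, (h a).length = L) (w : List α) :
    (w.map h).flatten.length = L * w.length := by
  simp [Function.comp_def, hL, Nat.mul_comm]

theorem getElem?_flatten_map_of_uniform (hL : ∀ a, (h a).length = L) {j : ℕ} (hj : j < L)
    (w : List α) (k : ℕ) :
    (w.map h).flatten[L * k + j]? = w[k]?.bind fun a => (h a)[j]? := by
  induction w generalizing k with
  | nil => simp
  | cons a w ih =>
    simp only [List.map_cons, List.flatten_cons]
    cases k with
    | zero => simp [List.getElem?_append_left (show j < (h a).length by rw [hL]; exact hj)]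
    | succ k =>
      rw [List.getElem?_append_right (by rw [hL, Nat.mul_succ]; omega), hL,
        show L * (k + 1) + j - L = L * k + j by rw [Nat.mul_succ]; omega, ih]
      simp

theorem pair_infix_flatten_map (hne : ∀ a, h a ≠ []) {u v : β} {w : List α}
    (huv : [u, v] <:+: (w.map h).flatten) : ∃ a b, [u, v] <:+: h a ++ h b := by
  induction w with
  | nil => simp at huv
  | cons a w ih =>
    rcases List.infix_append_iff_ne_nil.mp huv with hin | hin | ⟨l₁, l₂, h₁, h₂, hl, hs, hp⟩
    · exact ⟨a, a, List.infix_append_of_infix_left hin⟩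
    · exact ih hin
    · obtain ⟨rfl, rfl⟩ : l₁ = [u] ∧ l₂ = [v] := by
        rcases l₁ with _ | ⟨c, _ | ⟨d, l₁⟩⟩ <;> rcases l₂ with _ | ⟨e, l₂⟩ <;> simp_all
      cases w with
      | nil => simp at hp
      | cons b w =>
        refine ⟨a, b, List.infix_append_iff.mpr (Or.inr (Or.inr ⟨[u], [v], rfl, hs, ?_⟩))⟩
        obtain ⟨c, l, hc⟩ := List.exists_cons_of_ne_nil (hne b)
        simp_all

theorem sqFreeWord_flatten_map_of_synchronizing (hL : ∀ a, (h a).length = L) {q : ℕ}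
    (hq : q < L) (hinj : Function.Injective fun a => (h a)[q]?) {w : List α}
    (hw : SqFreeWord w)
    (hsync : ∀ x, x ≠ [] → x ++ x <:+: (w.map h).flatten → L ∣ x.length) :
    SqFreeWord (w.map h).flatten := by
  intro x hx hsq
  obtain ⟨m, hm⟩ := hsync x hx hsq
  obtain ⟨k, hlen, hk⟩ := List.exists_getElem?_eq_of_append_self_infix hsq
  have hper : ∀ i < x.length, (w.map h).flatten[k + i]? = (w.map h).flatten[k + x.length + i]? :=
    fun i hi => (hk i hi).1.trans (hk i hi).2.symm
  have hm0 : 0 < m := Nat.pos_of_ne_zero (by rintro rfl; simp_all)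
  have hL0 : 0 < L := Nat.pos_of_ne_zero (by rintro rfl; simp_all)
  rw [hm, length_flatten_map_of_uniform hL] at hlen
  -- `k₀` is the first block whose `q`-th letter lies inside the square
  set k₀ := (k + (L - 1 - q)) / L
  have hk₀ : k ≤ L * k₀ + q ∧ L * k₀ + q < k + L := by
    have h₁ : L * k₀ + (k + (L - 1 - q)) % L = k + (L - 1 - q) := Nat.div_add_mod _ _
    have h₂ := Nat.mod_lt (k + (L - 1 - q)) hL0
    omega
  have hcol : ∀ i < m, w[k₀ + i]? = w[k₀ + m + i]? := by
    intro i hi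
    have hLi : L * i + L ≤ L * m := by simpa [mul_add] using Nat.mul_le_mul_left L hi
    have e₁ : L * (k₀ + i) = L * k₀ + L * i := mul_add _ _ _
    have e₂ : L * (k₀ + m + i) = L * k₀ + L * m + L * i := by ring
    have hpos := hper (L * (k₀ + i) + q - k) (by omega)
    rw [show k + (L * (k₀ + i) + q - k) = L * (k₀ + i) + q by omega,
      show k + x.length + (L * (k₀ + i) + q - k) = L * (k₀ + m + i) + q by omega,
      getElem?_flatten_map_of_uniform hL hq, getElem?_flatten_map_of_uniform hL hq] at hpos
    exact Option.eq_of_bind_eq hinj (fun a => by simp [hL, hq]) hpos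
  refine List.not_sqFreeWord_of_period hm0 ?_ hcol hw
  by_contra hshort
  have := Nat.mul_le_mul_left L (show w.length + 1 ≤ k₀ + 2 * m by omega)
  simp only [mul_add, Nat.mul_left_comm L 2] at this
  omega

end UniformMorphism

section AlphaM

theorem alphaM_length (a : Fin 3) : (alphaM a).length = 4 := by
  fin_cases a <;> rfl

theorem alphaM_ne_nil (a : Fin 3) : alphaM a ≠ [] :=
  List.ne_nil_of_length_pos (by simp [alphaM_length])

theorem alphaM_getElem?_two_injective : Function.Injective fun a => (alphaM a)[2]? := by
  decide

theorem alphaM_getElem?_eq_zero_iff :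
    ∀ a (r : Fin 4) c, (alphaM a)[(r : ℕ)]? = some c → (c = 0 ↔ (r : ℕ) = 1) := by
  decide

theorem pair_infix_alphaM_append : ∀ (a b : Fin 3) (u v : Fin 4),
    [u, v] <:+: alphaM a ++ alphaM b →
      u ≠ v ∧ [u, v] ≠ [1, 2] ∧ [u, v] ≠ [2, 0] ∧ [u, v] ≠ [3, 0] := by
  decide

variable {w : List (Fin 3)}

theorem pair_infix_flatten_map_alphaM {u v : Fin 4} (h : [u, v] <:+: (w.map alphaM).flatten) :
    u ≠ v ∧ [u, v] ≠ [1, 2] ∧ [u, v] ≠ [2, 0] ∧ [u, v] ≠ [3, 0] := by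
  obtain ⟨a, b, hab⟩ := pair_infix_flatten_map alphaM_ne_nil h
  exact pair_infix_alphaM_append a b u v hab

theorem eq_zero_iff_of_getElem?_flatten_map_alphaM {i : ℕ} {c : Fin 4}
    (h : (w.map alphaM).flatten[i]? = some c) : c = 0 ↔ i % 4 = 1 := by
  have hi : i % 4 < 4 := Nat.mod_lt _ (by norm_num)
  rw [← Nat.div_add_mod i 4, getElem?_flatten_map_of_uniform alphaM_length hi] at h
  obtain ⟨a, -, ha⟩ := Option.bind_eq_some_iff.mp h
  exact alphaM_getElem?_eq_zero_iff a ⟨i % 4, hi⟩ c ha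

theorem four_dvd_length_of_append_self_infix_flatten_map_alphaM {x : List (Fin 4)}
    (hx : x ≠ []) (h : x ++ x <:+: (w.map alphaM).flatten) : 4 ∣ x.length := by
  obtain ⟨k, -, hk⟩ := List.exists_getElem?_eq_of_append_self_infix h
  have hn : 2 ≤ x.length := by
    by_contra hsmall
    have hx₁ : x.length = 1 := by have := List.length_pos_iff.mpr hx; omega
    obtain ⟨u, rfl⟩ := List.length_eq_one_iff.mp hx₁
    exact (pair_infix_flatten_map_alphaM h).1 rfl
  -- both halves carry the same letters, and the letter 0 marks exactly the positions ≡ 1 mod 4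
  have key : ∀ i < x.length, (k + i) % 4 = 1 ↔ (k + x.length + i) % 4 = 1 := fun i hi =>
    (eq_zero_iff_of_getElem?_flatten_map_alphaM (hk i hi).1).symm.trans
      (eq_zero_iff_of_getElem?_flatten_map_alphaM (hk i hi).2)
  rcases Nat.lt_or_ge ((5 - k % 4) % 4) x.length with hlt | hge
  · have := key _ hlt
    omega
  · have := key ((5 - k % 4) % 4 - x.length) (by omega)
    omega

end AlphaM

theorem stmt11 :
    (∀ w : List (Fin 3), SqFreeWord w → SqFreeWord (w.map alphaM).flatten) ∧
    (∀ w : List (Fin 3),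
      ¬ ([1,2] : List (Fin 4)) <:+: (w.map alphaM).flatten ∧
      ¬ ([2,0] : List (Fin 4)) <:+: (w.map alphaM).flatten ∧
      ¬ ([3,0] : List (Fin 4)) <:+: (w.map alphaM).flatten) :=
  ⟨fun _ hw => sqFreeWord_flatten_map_of_synchronizing alphaM_length (by norm_num : 2 < 4)
      alphaM_getElem?_two_injective hw fun _ =>
        four_dvd_length_of_append_self_infix_flatten_map_alphaM,
    fun _ => ⟨fun h => (pair_infix_flatten_map_alphaM h).2.1 rfl,
      fun h => (pair_infix_flatten_map_alphaM h).2.2.1 rfl,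
      fun h => (pair_infix_flatten_map_alphaM h).2.2.2 rfl⟩⟩
end

section
/- There exists an infinite square-free word over the three-letter alphabet {0,1,2} that is Abelian periodic, i.e., it can be factored as a concatenation of finite blocks all of which are Abelian equivalent (have the same number of occurrences of each letter). -/
set_option maxRecDepth 4000000
set_option maxHeartbeats 4000000

def infShuffle {α : Type*} (u v : ℕ → α) (β : ℕ → Bool) (n : ℕ) : α :=
  let j := ((Finset.range n).filter (fun k => β k = β n)).card
  if β n then v j else u j

def SqFreeInf {α : Type*} (w : ℕ → α) : Prop :=
  ∀ i l : ℕ, 0 < l → ¬ (∀ k < l, w (i + k) = w (i + l + k))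

def hm : Fin 3 → List (Fin 3)
  | 0 => [0,1,0,2,0,1,2,0,2,1,0,1,2,1,0,2,1,2]
  | 1 => [0,1,0,2,0,1,2,0,2,1,2,0,1,2,1,0,1,2]
  | 2 => [0,1,0,2,0,1,2,1,0,2,1,2,0,2,1,0,1,2]

def DH : Fin 3 → ℕ
  | 0 => 30911687464548865518377023089566332502960575554922506656635896945432254772518684054760251443697166033319207937916178404391858703142760969830383283556303968
  | 1 => 30911687464548865533761163106759958968132022124363989414574096405977002524761907539567475758950483952769987241458490990457280246224383429735772377457749920
  | 2 => 30911687464548865533761163106759958968132022386324176009397610169121668797359081546087594614473632158093452106172543868494378490753113660939547466593201760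

def DW (a b : Fin 3) : ℕ := DH a + 3 ^ 324 * DH b

def tw (n : ℕ) : Fin 3 :=
  if h : n = 0 then 0
  else (hm (tw (n / 18))).getD (n % 18) 0
  decreasing_by exact Nat.div_lt_self (Nat.pos_of_ne_zero h) (by norm_num)

theorem tw_zero : tw 0 = 0 := by rw [tw]; rfl

theorem tw_block (j r : ℕ) (hr : r < 18) : tw (18 * j + r) = (hm (tw j)).getD r 0 := by
  by_cases h0 : 18 * j + r = 0
  · have hj : j = 0 := by omega
    have hr0 : r = 0 := by omega
    subst hj; subst hr0
    show tw 0 = (hm (tw 0)).getD 0 0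
    rw [tw_zero]
    decide
  · conv_lhs => rw [tw]
    rw [dif_neg h0, show (18 * j + r) / 18 = j from by omega,
      show (18 * j + r) % 18 = r from by omega]

-- digit encodings: (H2 a)[r] = DH a / 3^r % 3 where H2 a = join (map hm (hm a))
def chk2 : Bool := (List.finRange 3).all fun a => (List.range 324).all fun r =>
  decide (((hm ((hm a).getD (r / 18) 0)).getD (r % 18) 0).val = DH a / 3 ^ r % 3)

theorem chk2t : chk2 = true := by decide

theorem F2D (a : Fin 3) (r : ℕ) (hr : r < 324) :
    ((hm ((hm a).getD (r / 18) 0)).getD (r % 18) 0).val = DH a / 3 ^ r % 3 := by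
  have h := chk2t
  simp only [chk2, List.all_eq_true, decide_eq_true_eq] at h
  exact h a (List.mem_finRange a) r (List.mem_range.mpr hr)

theorem tw_d1 (j r : ℕ) (hr : r < 324) :
    (tw (324 * j + r)).val = DH (tw j) / 3 ^ r % 3 := by
  have e1 : 324 * j + r = 18 * (18 * j + r / 18) + r % 18 := by omega
  rw [e1, tw_block _ _ (by omega), tw_block j (r / 18) (by omega)]
  exact F2D (tw j) r hr

theorem DH_lt : ∀ a : Fin 3, DH a < 3 ^ 324 := by decide

theorem dw_lo (a b : Fin 3) (r : ℕ) (hr : r < 324) :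
    DW a b / 3 ^ r % 3 = DH a / 3 ^ r % 3 := by
  have e : DW a b = DH a + 3 ^ r * (3 * (3 ^ (323 - r) * DH b)) := by
    unfold DW
    congr 1
    calc 3 ^ 324 * DH b = (3 ^ r * 3 * 3 ^ (323 - r)) * DH b := by
          rw [← pow_succ, ← pow_add, show r + 1 + (323 - r) = 324 from by omega]
      _ = 3 ^ r * (3 * (3 ^ (323 - r) * DH b)) := by ring
  rw [e, Nat.add_mul_div_left _ _ (pow_pos (by norm_num) r), Nat.add_mul_mod_self_left]

theorem dw_hi (a b : Fin 3) (r : ℕ) (hr : 324 ≤ r) :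
    DW a b / 3 ^ r % 3 = DH b / 3 ^ (r - 324) % 3 := by
  have e1 : DW a b / 3 ^ r = DH b / 3 ^ (r - 324) := by
    rw [show (3:ℕ) ^ r = 3 ^ 324 * 3 ^ (r - 324) from by
      rw [← pow_add, show 324 + (r - 324) = r from by omega]]
    rw [← Nat.div_div_eq_div_mul]
    unfold DW
    rw [Nat.add_mul_div_left _ _ (pow_pos (by norm_num) 324),
      Nat.div_eq_of_lt (DH_lt a), zero_add]
  rw [e1]

theorem tw_d (j r : ℕ) (hr : r < 648) :
    (tw (324 * j + r)).val = DW (tw j) (tw (j + 1)) / 3 ^ r % 3 := by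
  by_cases hc : r < 324
  · rw [tw_d1 j r hc, dw_lo _ _ _ hc]
  · rw [show 324 * j + r = 324 * (j + 1) + (r - 324) from by omega,
      tw_d1 (j + 1) (r - 324) (by omega), dw_hi _ _ _ (by omega)]

-- no two adjacent equal letters inside an H2 image
def chk4 : Bool := (List.finRange 3).all fun a => (List.range 323).all fun s =>
  decide (DH a / 3 ^ s % 3 ≠ DH a / 3 ^ (s + 1) % 3)

theorem chk4t : chk4 = true := by decide

theorem F4D (a : Fin 3) (s : ℕ) (hs : s < 323) :
    DH a / 3 ^ s % 3 ≠ DH a / 3 ^ (s + 1) % 3 := by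
  have h := chk4t
  simp only [chk4, List.all_eq_true, decide_eq_true_eq] at h
  exact h a (List.mem_finRange a) s (List.mem_range.mpr hs)

theorem F5D : ∀ a b : Fin 3, a ≠ b → DH a / 3 ^ 323 % 3 ≠ DH b / 3 ^ 0 % 3 := by
  decide

theorem one_step : ∀ i : ℕ, tw i ≠ tw (i + 1) := by
  intro i
  induction i using Nat.strong_induction_on with
  | _ i ih =>
    have hmod : i % 324 < 324 := Nat.mod_lt _ (by norm_num)
    by_cases hs : i % 324 < 323
    · intro h
      have e1 : i = 324 * (i / 324) + i % 324 := by omega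
      have e2 : i + 1 = 324 * (i / 324) + (i % 324 + 1) := by omega
      have d1 := tw_d1 (i / 324) (i % 324) hmod
      have d2 := tw_d1 (i / 324) (i % 324 + 1) (by omega)
      exact F4D (tw (i / 324)) (i % 324) hs
        (by rw [← d1, ← d2, ← e1, ← e2, h])
    · have hs' : i % 324 = 323 := by omega
      intro h
      have e1 : i = 324 * (i / 324) + 323 := by omega
      have e2 : i + 1 = 324 * (i / 324 + 1) + 0 := by omega
      have d1 := tw_d1 (i / 324) 323 (by norm_num)
      have d2 := tw_d1 (i / 324 + 1) 0 (by norm_num)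
      have hij : i / 324 < i := by omega
      exact F5D (tw (i / 324)) (tw (i / 324 + 1)) (ih (i / 324) hij)
        (by rw [← d1, ← d2, ← e1, ← e2, h])

-- small squares: chunk check on the 648-digit windows
def chkS (N : ℕ) : Bool := (List.range 324).all fun s => (List.range 33).all fun l2 =>
  decide (N / 3 ^ s % 3 ^ (l2 + 2) ≠ N / 3 ^ (s + l2 + 2) % 3 ^ (l2 + 2))

theorem chkSt : ∀ a b : Fin 3, a ≠ b → chkS (DW a b) = true := by decide

theorem small_ext (N : ℕ) (hN : chkS N = true) :
    ∀ s, s < 324 → ∀ l, 2 ≤ l → l ≤ 34 →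
      N / 3 ^ s % 3 ^ l ≠ N / 3 ^ (s + l) % 3 ^ l := by
  intro s hs l h2 h34
  simp only [chkS, List.all_eq_true, decide_eq_true_eq] at hN
  have h := hN s (List.mem_range.mpr hs) (l - 2) (List.mem_range.mpr (by omega))
  rw [show l - 2 + 2 = l from by omega] at h
  rw [show s + l = s + (l - 2) + 2 from by omega]
  exact h

theorem mod_chunk_eq : ∀ (l a b : ℕ),
    (∀ k, k < l → a / 3 ^ k % 3 = b / 3 ^ k % 3) → a % 3 ^ l = b % 3 ^ l := by
  intro l
  induction l with
  | zero => intro a b _; simp [Nat.mod_one]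
  | succ m ihm =>
    intro a b h
    have h1 : a % 3 ^ m = b % 3 ^ m := ihm a b (fun k hk => h k (by omega))
    have h2 : a / 3 ^ m % 3 = b / 3 ^ m % 3 := h m (by omega)
    rw [pow_succ, Nat.mod_mul, Nat.mod_mul, h1, h2]

-- synchronization: hm a occurs in hm b ++ hm c only at aligned offsets
theorem F7 : ∀ a b c : Fin 3, b ≠ c → ∀ s, s < 18 → 0 < s →
    ∃ r, r < 18 ∧ (hm a).getD r 0 ≠
      (if s + r < 18 then (hm b).getD (s + r) 0 else (hm c).getD (s + r - 18) 0) := by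
  decide

theorem F8 : ∀ a b : Fin 3,
    (∀ r, r < 18 → (hm a).getD r 0 = (hm b).getD r 0) → a = b := by decide

theorem F9 : ∀ s, s < 18 → 0 < s →
    (∀ a b : Fin 3,
      (∀ k, k < s → (hm a).getD (18 - s + k) 0 = (hm b).getD (18 - s + k) 0) → a = b) ∨
    (∀ a b : Fin 3,
      (∀ k, k < 18 - s → (hm a).getD k 0 = (hm b).getD k 0) → a = b) := by decide

theorem noSquare : ∀ l : ℕ, 0 < l → ∀ i : ℕ,
    ¬ (∀ k, k < l → tw (i + k) = tw (i + l + k)) := by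
  intro l
  induction l using Nat.strong_induction_on with
  | _ l ih =>
    intro hl i hsq
    by_cases h1 : l = 1
    · subst h1
      exact one_step i (by simpa using hsq 0 (by omega))
    have hE : ∀ x, i ≤ x → x < i + l → tw x = tw (x + l) := by
      intro x hx1 hx2
      have h := hsq (x - i) (by omega)
      rw [show i + (x - i) = x from by omega,
        show i + l + (x - i) = x + l from by omega] at h
      exact h
    by_cases hbig : 35 ≤ l
    · -- large squares: descend via the morphism structure
      set j' := (i + 17) / 18 with hj'
      set M := 18 * j' + l with hMd
      set m := M / 18 with hmd
      set s := M % 18 with hsd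
      have hs0 : s = 0 := by
        by_contra hsne
        obtain ⟨r, hr, hne⟩ := F7 (tw j') (tw m) (tw (m + 1)) (one_step m) s
          (by omega) (by omega)
        apply hne
        have hb1 : (hm (tw j')).getD r 0 = tw (18 * j' + l + r) := by
          rw [← tw_block j' r hr, show 18 * j' + l + r = (18 * j' + r) + l from by omega]
          exact hE (18 * j' + r) (by omega) (by omega)
        rw [hb1]
        by_cases hc : s + r < 18
        · rw [if_pos hc, show 18 * j' + l + r = 18 * m + (s + r) from by omega]
          exact tw_block m (s + r) hc
        · rw [if_neg hc, show 18 * j' + l + r = 18 * (m + 1) + (s + r - 18) from by omega]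
          exact tw_block (m + 1) (s + r - 18) (by omega)
      have hl18 : l % 18 = 0 := by omega
      set q := l / 18 with hqd
      have hlq : l = 18 * q := by omega
      have hq2 : 2 ≤ q := by omega
      have hfull : ∀ J, i ≤ 18 * J → 18 * J + 18 ≤ i + l → tw J = tw (J + q) := by
        intro J hJ1 hJ2
        apply F8
        intro r hr
        rw [← tw_block J r hr, ← tw_block (J + q) r hr,
          show 18 * (J + q) + r = (18 * J + r) + l from by omega]
        exact hE (18 * J + r) (by omega) (by omega)
      by_cases hi0 : i % 18 = 0
      · exact ih q (by omega) (by omega) (i / 18) (fun k hk => by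
          have h := hfull (i / 18 + k) (by omega) (by omega)
          rw [show i / 18 + q + k = i / 18 + k + q from by omega]
          exact h)
      · set j0 := i / 18 with hj0
        set s1 := 18 - i % 18 with hs1d
        rcases F9 s1 (by omega) (by omega) with hL | hR
        · have hb : tw j0 = tw (j0 + q) := by
            apply hL
            intro k hk
            rw [show 18 - s1 + k = i % 18 + k from by omega,
              ← tw_block j0 (i % 18 + k) (by omega),
              ← tw_block (j0 + q) (i % 18 + k) (by omega),
              show 18 * j0 + (i % 18 + k) = i + k from by omega,
              show 18 * (j0 + q) + (i % 18 + k) = (i + k) + l from by omega]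
            exact hE (i + k) (by omega) (by omega)
          exact ih q (by omega) (by omega) j0 (fun k hk => by
            rcases Nat.eq_zero_or_pos k with rfl | hkpos
            · simpa using hb
            · have h := hfull (j0 + k) (by omega) (by omega)
              rw [show j0 + q + k = j0 + k + q from by omega]
              exact h)
        · have hb : tw (j0 + q) = tw (j0 + q + q) := by
            apply hR
            intro k hk
            rw [← tw_block (j0 + q) k (by omega), ← tw_block (j0 + q + q) k (by omega),
              show 18 * (j0 + q + q) + k = (18 * (j0 + q) + k) + l from by omega]
            exact hE (18 * (j0 + q) + k) (by omega) (by omega)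
          exact ih q (by omega) (by omega) (j0 + 1) (fun k hk => by
            by_cases hkq : k = q - 1
            · subst hkq
              rw [show j0 + 1 + (q - 1) = j0 + q from by omega,
                show j0 + 1 + q + (q - 1) = j0 + q + q from by omega]
              exact hb
            · have h := hfull (j0 + 1 + k) (by omega) (by omega)
              rw [show j0 + 1 + q + k = j0 + 1 + k + q from by omega]
              exact h)
    · -- small squares: 2 ≤ l ≤ 34
      set j := i / 324 with hjd
      set s := i % 324 with hsd
      have hab : tw j ≠ tw (j + 1) := one_step j
      have hkey := small_ext (DW (tw j) (tw (j + 1))) (chkSt _ _ hab) s (by omega) l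
        (by omega) (by omega)
      apply hkey
      apply mod_chunk_eq
      intro k hk
      rw [Nat.div_div_eq_div_mul, ← pow_add, Nat.div_div_eq_div_mul, ← pow_add,
        ← tw_d j (s + k) (by omega), ← tw_d j (s + l + k) (by omega),
        show 324 * j + (s + k) = i + k from by omega,
        show 324 * j + (s + l + k) = i + l + k from by omega]
      exact congrArg Fin.val (hsq k hk)

theorem F10 : ∀ a b : Fin 3,
    ((List.range 18).map fun k => (hm b).getD k 0).count a = 6 := by decide

theorem cnt : ∀ (n : ℕ) (a : Fin 3),
    ((List.range 18).map (fun k => tw (n * 18 + k))).count a = 6 := by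
  intro n a
  have hmap : ((List.range 18).map (fun k => tw (n * 18 + k)))
      = (List.range 18).map (fun k => (hm (tw n)).getD k 0) := by
    apply List.map_congr_left
    intro k hk
    rw [show n * 18 + k = 18 * n + k from by ring]
    exact tw_block n k (List.mem_range.mp hk)
  rw [hmap]
  exact F10 a (tw n)

theorem stmt13 :
    ∃ (w : ℕ → Fin 3), SqFreeInf w ∧
      ∃ p : ℕ, 0 < p ∧ ∀ (a : Fin 3) (n : ℕ),
        ((List.range p).map (fun k => w (n * p + k))).count a
          = ((List.range p).map (fun k => w k)).count a := by
  refine ⟨tw, fun i l hl => noSquare l hl i, 18, by norm_num, fun a n => ?_⟩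
  have h0 : ((List.range 18).map (fun k => tw k))
      = (List.range 18).map (fun k => tw (0 * 18 + k)) := by
    apply List.map_congr_left
    intro k _
    norm_num
  rw [cnt n a, h0, cnt 0 a]
end

section
/- The square-free Lyndon word u = 01202102 over {0,1,2} can be shuffled with itself, via the conducting sequence β = 0010111110010100, to obtain w = 0102120210201202, which is a square-free Lyndon word; moreover w is lexicographically strictly smaller than u. -/
def IsLyndon {α : Type*} [LinearOrder α] (l : List α) : Prop :=
  ∀ s t : List α, l = s ++ t → s ≠ [] → t ≠ [] → List.Lex (· < ·) l (t ++ s)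


lemma sqfree_of_check_s17 {α : Type*} [DecidableEq α] (w : List α)
    (h : ∀ y ∈ w.tails.flatMap List.inits,
      ¬(y ≠ [] ∧ y.length % 2 = 0 ∧ y.take (y.length / 2) = y.drop (y.length / 2))) :
    SqFreeWord w := by
  intro x hx hinf
  rw [List.infix_iff_prefix_suffix] at hinf
  obtain ⟨t, hp, hs⟩ := hinf
  have hmem : (x ++ x) ∈ w.tails.flatMap List.inits := by
    rw [List.mem_flatMap]
    exact ⟨t, (List.mem_tails _ _).2 hs, (List.mem_inits _ _).2 hp⟩
  refine h _ hmem ⟨by simp [hx], ?_, ?_⟩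
  · simp [List.length_append, Nat.mul_comm, Nat.mul_mod_right, two_mul]
    omega
  · have hl : (x ++ x).length / 2 = x.length := by
      simp [List.length_append]; omega
    rw [hl, List.take_left, List.drop_left]

lemma lyndon_of_check {α : Type*} [LinearOrder α] (l : List α)
    (h : ∀ i < l.length, 0 < i → List.Lex (· < ·) l (l.drop i ++ l.take i)) :
    IsLyndon l := by
  intro s t heq hs ht
  have hi : s.length < l.length := by
    rw [heq, List.length_append]
    have : 0 < t.length := List.length_pos_iff.2 ht
    omega
  have hp : 0 < s.length := List.length_pos_iff.2 hs
  have := h s.length hi hp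
  rw [heq]; rwa [heq, List.take_left, List.drop_left] at this

set_option maxRecDepth 20000 in
theorem stmt17 :
    SqFreeWord ([0,1,2,0,2,1,0,2] : List (Fin 3)) ∧ IsLyndon ([0,1,2,0,2,1,0,2] : List (Fin 3)) ∧
    condShuffle [false,false,true,false,true,true,true,true,true,false,false,true,false,true,false,false] ([0,1,2,0,2,1,0,2] : List (Fin 3)) ([0,1,2,0,2,1,0,2] : List (Fin 3)) = [0,1,0,2,1,2,0,2,1,0,2,0,1,2,0,2] ∧
    SqFreeWord ([0,1,0,2,1,2,0,2,1,0,2,0,1,2,0,2] : List (Fin 3)) ∧ IsLyndon ([0,1,0,2,1,2,0,2,1,0,2,0,1,2,0,2] : List (Fin 3)) ∧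
    List.Lex (· < ·) ([0,1,0,2,1,2,0,2,1,0,2,0,1,2,0,2] : List (Fin 3)) ([0,1,2,0,2,1,0,2] : List (Fin 3)) := by
  refine ⟨sqfree_of_check_s17 _ (by decide), lyndon_of_check _ (by decide), by decide,
    sqfree_of_check_s17 _ (by decide), lyndon_of_check _ (by decide), by decide⟩
end

section
/- Let u be the lexicographically least infinite square-free word over {0,1,2} (with 0 < 1 < 2). Then for every infinite binary conducting sequence β containing infinitely many 0's and 1's, the shuffle u ⧢_β u is not square-free. -/
/-!
The least square-free word `u` is ≤ each of its suffixes (they are square-free too). If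
`w = u ⧢_β u` were square-free, each suffix of `w` would also be ≥ `u`. Cut `w` into the maximal
runs of `β`; run `i` copies a factor of one copy of `u`. Comparing the suffix of `w` at a run
start with `u`, and `u` with its own suffix, shows by induction on `i` that from every run start
`w` reads a prefix of `u` up to the end of run `i`. In particular runs `i` and `i + 1` together
read a prefix of `u`, so square-freeness of `u` makes run `i + 1` shorter than run `i`: the run
lengths would form an infinite strictly decreasing sequence of natural numbers.
-/

open Function

section Words

variable {α : Type*}

theorem SqFreeInf.shift {w : ℕ → α} (hw : SqFreeInf w) (d : ℕ) :
    SqFreeInf (fun n => w (d + n)) := fun i l hl hsq =>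
  hw (d + i) l hl fun k hk => by simpa only [add_assoc] using hsq k hk

theorem SqFreeInf.lt_of_shift_agree {u : ℕ → α} (hu : SqFreeInf u) {p n : ℕ} (hp : 0 < p)
    (h : ∀ k < n, u (p + k) = u k) : n < p := by
  by_contra! hpn
  exact hu 0 p hp fun k hk => by simpa using (h k (by omega)).symm

variable [LinearOrder α]

theorem shift_agree_of_toLex_le {u x : ℕ → α} {p n : ℕ} (hux : toLex u ≤ toLex x)
    (hup : toLex u ≤ toLex (fun k => u (p + k))) (hpre : ∀ k < p, x k = u k)
    (hnext : ∀ k < n, x (p + k) = u k) : ∀ k < n, u (p + k) = u k := by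
  intro k
  induction k using Nat.strong_induction_on with
  | _ k ih =>
    intro hk
    have hx : u (p + k) ≤ x (p + k) := Pi.apply_le_of_toLex hux fun t ht => by
      rcases lt_or_ge t p with htp | htp
      · exact (hpre t htp).symm
      · obtain ⟨t, rfl⟩ := Nat.exists_eq_add_of_le htp
        rw [hnext t (by omega), ih t (by omega) (by omega)]
    have hu : u k ≤ u (p + k) := Pi.apply_le_of_toLex hup fun t ht => (ih t ht (by omega)).symm
    -- at a first disagreement of `u (p + k)` with `u k`, the word `x` would drop below `u`
    exact le_antisymm (hx.trans_eq (hnext k hk)) hu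

end Words

/-- A decomposition of `w` as a shuffle of `u` with itself into nonempty runs: run `i` occupies
`[start i, start (i + 1))` of `w` and copies `u` from position `src i`. Even runs read one copy of
`u` and odd runs the other, each resuming where the previous run of its copy stopped. -/
structure ShuffleRuns {α : Type*} (u w : ℕ → α) where
  start : ℕ → ℕ
  len : ℕ → ℕ
  src : ℕ → ℕ
  len_pos (i : ℕ) : 0 < len i
  start_succ (i : ℕ) : start (i + 1) = start i + len i
  src_zero : src 0 = 0
  src_one : src 1 = 0
  src_add_two (i : ℕ) : src (i + 2) = src i + len i
  apply_start_add {i m : ℕ} : m < len i → w (start i + m) = u (src i + m)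

namespace ShuffleRuns

variable {α : Type*} {u w : ℕ → α}

section

variable (R : ShuffleRuns u w)

theorem start_strictMono : StrictMono R.start :=
  strictMono_nat_of_lt_succ fun i => by
    rw [R.start_succ]
    exact Nat.lt_add_of_pos_right (R.len_pos i)

def PrefixUpTo (i : ℕ) : Prop :=
  ∀ j ≤ i, ∀ k, R.start j + k < R.start (i + 1) → w (R.start j + k) = u k

def SrcPrefix (i : ℕ) : Prop :=
  ∀ m < R.len i, u (R.src (i + 1) + m) = u m

variable {R}

theorem PrefixUpTo.len_add {i j k : ℕ} (h : R.PrefixUpTo i) (hj : j < i)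
    (hk : R.start (j + 1) + k < R.start (i + 1)) : u (R.len j + k) = u k := by
  rw [R.start_succ] at hk
  calc u (R.len j + k) = w (R.start j + (R.len j + k)) := (h j hj.le _ (by omega)).symm
    _ = w (R.start (j + 1) + k) := by rw [R.start_succ, add_assoc]
    _ = u k := h (j + 1) hj k (by rw [R.start_succ]; omega)

theorem PrefixUpTo.start_lt (hu : SqFreeInf u) {i j : ℕ} (h : R.PrefixUpTo i) (hj : j < i) :
    R.start (i + 1) < R.start (j + 1) + R.len j := by
  have := hu.lt_of_shift_agree (R.len_pos j) (n := R.start (i + 1) - R.start (j + 1))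
    fun k hk => h.len_add hj (by omega)
  omega

theorem srcPrefix_succ {i : ℕ} (hprev : ∀ m < R.len i + R.len (i + 1), u (R.src i + m) = u m)
    (h : R.PrefixUpTo (i + 1)) : R.SrcPrefix (i + 1) := by
  intro m hm
  rw [show R.src (i + 1 + 1) = R.src i + R.len i from R.src_add_two i, add_assoc,
    hprev _ (by omega)]
  exact h.len_add (Nat.lt_succ_self i) (by rw [R.start_succ (i + 1)]; omega)

end

section Lyndon

variable [LinearOrder α] (hu : SqFreeInf u) (hlyn : ∀ p, toLex u ≤ toLex (fun k => u (p + k)))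
  (hw : ∀ p, toLex u ≤ toLex (fun k => w (p + k)))
include hu hlyn hw

theorem PrefixUpTo.succ {R : ShuffleRuns u w} {i : ℕ} (h : R.PrefixUpTo i)
    (hsrc : R.SrcPrefix i) : R.PrefixUpTo (i + 1) := by
  -- `hsrc` only controls the first `len i` letters of run `i + 1`; comparing `w` with `u` at
  -- the start of run `i` then shows that run `i + 1` is shorter than that.
  set n := min (R.len (i + 1)) (R.len i)
  have hnext : ∀ k < n, w (R.start (i + 1) + k) = u k := fun k hk => by
    rw [R.apply_start_add (by omega), hsrc k (by omega)]
  have hshift : ∀ j ≤ i, ∀ k < n, u (R.start (i + 1) - R.start j + k) = u k := by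
    intro j hj
    have hlt : R.start j < R.start (i + 1) := R.start_strictMono (by omega)
    refine shift_agree_of_toLex_le (hw (R.start j)) (hlyn _)
      (fun k hk => h j hj k (by omega)) fun k hk => ?_
    rw [← hnext k hk]
    congr 1
    omega
  have hn : n = R.len (i + 1) := by
    have := hu.lt_of_shift_agree (R.len_pos i) (n := n) fun k hk => by
      simpa [R.start_succ] using hshift i le_rfl k hk
    omega
  intro j hj k hk
  rcases hj.lt_or_eq with hj | rfl
  · have hlt : R.start j < R.start (i + 1) := R.start_strictMono hj
    rcases lt_or_ge (R.start j + k) (R.start (i + 1)) with hk' | hk'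
    · exact h j (by omega) k hk'
    · obtain ⟨t, rfl⟩ : ∃ t, k = R.start (i + 1) - R.start j + t :=
        ⟨k - (R.start (i + 1) - R.start j), by omega⟩
      rw [R.start_succ (i + 1)] at hk
      rw [hshift j (by omega) t (by omega), ← hnext t (by omega)]
      congr 1
      omega
  · exact hnext k (by rw [R.start_succ (i + 1)] at hk; omega)

theorem srcPrefix_and_prefixUpTo_succ (R : ShuffleRuns u w) (i : ℕ) :
    R.SrcPrefix i ∧ R.PrefixUpTo (i + 1) ∧ R.SrcPrefix (i + 1) := by
  induction i with
  | zero =>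
    have h0 : R.PrefixUpTo 0 := fun j hj k hk => by
      obtain rfl := Nat.le_zero.1 hj
      rw [R.start_succ] at hk
      rw [R.apply_start_add (by omega), R.src_zero, zero_add]
    have hs0 : R.SrcPrefix 0 := fun m _ => by rw [R.src_one, zero_add]
    have h1 := h0.succ hu hlyn hw hs0
    exact ⟨hs0, h1, srcPrefix_succ (fun m _ => by rw [R.src_zero, zero_add]) h1⟩
  | succ i ih =>
    obtain ⟨hsrc, hpre, hsrc'⟩ := ih
    have hpre' := hpre.succ hu hlyn hw hsrc'
    have hlen := hpre'.start_lt hu (Nat.lt_succ_of_lt (Nat.lt_succ_self i))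
    rw [R.start_succ (i + 1 + 1), R.start_succ (i + 1)] at hlen
    exact ⟨hsrc', hpre', srcPrefix_succ (fun m hm => hsrc m (by omega)) hpre'⟩

theorem len_succ_lt (R : ShuffleRuns u w) (i : ℕ) : R.len (i + 1) < R.len i := by
  have := (R.srcPrefix_and_prefixUpTo_succ hu hlyn hw i).2.1.start_lt hu (Nat.lt_succ_self i)
  rw [R.start_succ (i + 1)] at this
  omega

theorem isEmpty : IsEmpty (ShuffleRuns u w) :=
  ⟨fun R => not_strictAnti_of_wellFoundedLT R.len
    (strictAnti_nat_of_succ_lt (R.len_succ_lt hu hlyn hw))⟩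

end Lyndon

end ShuffleRuns

theorem Nat.count_add_of_forall {p : ℕ → Prop} [DecidablePred p] {a m : ℕ}
    (h : ∀ k < m, p (a + k)) : Nat.count p (a + m) = Nat.count p a + m := by
  rw [Nat.count_add, Nat.count_of_forall h]

theorem Nat.count_add_of_forall_not {p : ℕ → Prop} [DecidablePred p] {a m : ℕ}
    (h : ∀ k < m, ¬p (a + k)) : Nat.count p (a + m) = Nat.count p a := by
  rw [Nat.count_add, Nat.count_of_forall_not h, add_zero]

section Runs

variable {β : ℕ → Bool}

theorem exists_next_switch {n : ℕ} (h : ∃ m, n < m ∧ β m ≠ β n) :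
    ∃ m, n < m ∧ β m ≠ β n ∧ ∀ k, n < k → k < m → β k = β n := by
  classical
  refine ⟨Nat.find h, (Nat.find_spec h).1, (Nat.find_spec h).2, fun k hnk hkm => ?_⟩
  by_contra hk
  exact Nat.find_min h hkm ⟨hnk, hk⟩

theorem infShuffle_self_apply {α : Type*} (u : ℕ → α) (n : ℕ) :
    infShuffle u u β n = u (Nat.count (fun k => β k = β n) n) := by
  simp only [infShuffle, ite_self, Nat.count_eq_card_filter_range]

/-- The runs are the maximal blocks on which `β` is constant. -/
noncomputable def infShuffleRuns {α : Type*} (u : ℕ → α)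
    (hsw : ∀ n, ∃ m, n < m ∧ β m ≠ β n) : ShuffleRuns u (infShuffle u u β) := by
  choose next lt_next next_ne const using fun n => exists_next_switch (hsw n)
  let start (i : ℕ) : ℕ := next^[i] 0
  have start_zero : start 0 = 0 := rfl
  have start_succ (i : ℕ) : start (i + 1) = next (start i) := iterate_succ_apply' next i 0
  let len (i : ℕ) : ℕ := start (i + 1) - start i
  have start_add (i : ℕ) : start (i + 1) = start i + len i := by
    have := lt_next (start i); rw [← start_succ] at this; exact (Nat.add_sub_of_le this.le).symm
  have run_const (i m : ℕ) (hm : m < len i) : β (start i + m) = β (start i) := by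
    rcases m.eq_zero_or_pos with rfl | hm0
    · rfl
    · exact const _ _ (by omega) (by rw [← start_succ, start_add]; omega)
  have color_add_two (i : ℕ) : β (start (i + 2)) = β (start i) := by
    have h1 := next_ne (start i)
    have h2 := next_ne (start (i + 1))
    rw [← start_succ] at h1 h2
    revert h1 h2
    cases β (start i) <;> cases β (start (i + 1)) <;> cases β (start (i + 2)) <;> decide
  refine
    { start, len
      src := fun i => Nat.count (fun k => β k = β (start i)) (start i)
      len_pos := fun i => by
        have := start_add i
        have := lt_next (start i)
        rw [← start_succ] at this
        omega
      start_succ := start_add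
      src_zero := Nat.count_zero _
      src_one := Nat.count_of_forall_not fun m hm => ?_
      src_add_two := fun i => ?_
      apply_start_add := fun {i m} hm => ?_ }
  · have h := next_ne (start 0)
    rw [start_add, start_zero] at hm
    rw [← start_succ, ← run_const 0 m (by omega), start_zero] at h
    simpa using h.symm
  · show Nat.count _ (start (i + 2)) = Nat.count _ (start i) + len i
    rw [color_add_two, start_add (i + 1), Nat.count_add_of_forall_not fun k hk => ?_, start_add,
      Nat.count_add_of_forall (run_const i)]
    rw [run_const (i + 1) k hk, start_succ]
    exact next_ne (start i)
  · rw [infShuffle_self_apply, run_const i m hm,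
      Nat.count_add_of_forall fun k hk => run_const i k (by omega)]

end Runs

theorem stmt19 (u : ℕ → Fin 3) (hu : SqFreeInf u)
    (hmin : ∀ v : ℕ → Fin 3, SqFreeInf v →
      u = v ∨ ∃ n : ℕ, (∀ k < n, u k = v k) ∧ u n < v n)
    (β : ℕ → Bool)
    (hb0 : ∀ n : ℕ, ∃ m, n ≤ m ∧ β m = false)
    (hb1 : ∀ n : ℕ, ∃ m, n ≤ m ∧ β m = true) :
    ¬ SqFreeInf (infShuffle u u β) := by
  intro hsq
  have hlex : ∀ v, SqFreeInf v → toLex u ≤ toLex v := fun v hv => by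
    rcases hmin v hv with rfl | hlt
    exacts [le_rfl, le_of_lt hlt]
  have hsw : ∀ n, ∃ m, n < m ∧ β m ≠ β n := fun n => by
    cases hβ : β n
    · obtain ⟨m, hm, hβm⟩ := hb1 (n + 1)
      exact ⟨m, by omega, by simp [hβm]⟩
    · obtain ⟨m, hm, hβm⟩ := hb0 (n + 1)
      exact ⟨m, by omega, by simp [hβm]⟩
  exact (ShuffleRuns.isEmpty hu (fun p => hlex _ (hu.shift p))
    (fun p => hlex _ (hsq.shift p))).false (infShuffleRuns u hsw)
end
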